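/- arXiv:1106.0792 — 8 statements merged into one kernel-verified Lean document; each statement's English description precedes it below -/
import Mathlib

section
/- Let d ≥ 2 and let λ₁, ..., λ_{d-1} ∈ ℂ be such that for every nonempty subset I ⊆ {1,...,d-1}, the sum ∑_{i∈I} λ_i is nonzero. Let P ∈ ℂ[[T]] be a formal power series whose constant term equals λ₁ + λ₂ + ⋯ + λ_{d-1}. Then there exist r₁, r₂, ..., r_{d-1} ∈ ℂ such that P - ∑_{i=1}^{d-1} λ_i · exp(r_i T) is divisible by T^d in ℂ[[T]]. -/
/-!
Comparing coefficients, one must solve `∑ i, l i * r i ^ k = k! * coeff k P` for `1 ≤ k ≤ n`,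
`n = d - 1`, i.e. show that the weighted power sums `w k = ∑ i, l i * X i ^ k` define a surjective
map `ℂⁿ → ℂⁿ`. The subset-sum condition says exactly that `0` is their only common zero (a
polynomial vanishing at `0` and at all but one value of `x` isolates the total weight of that
value). By the Nullstellensatz every variable then lies in the radical of the ideal of the
homogeneous `w k`, which makes `ℂ[X]` a finite module over `ℂ[w]`. Integrality forces the `w k` to
be algebraically independent, so `ℂ[w]` is a polynomial ring, and lying over its maximal ideal at
`c` gives a point `r` with `w k (r) = c k`.
-/

open Set Algebra

open Polynomial in
theorem sum_mul_eval_eq_zero_of_sum_mul_pow_eq_zero {ι K : Type*} [Fintype ι] [CommRing K]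
    {n : ℕ} (l x : ι → K) (h : ∀ k, 0 < k → k ≤ n → ∑ i, l i * x i ^ k = 0)
    (p : K[X]) (hp0 : p.coeff 0 = 0) (hpn : p.natDegree ≤ n) :
    ∑ i, l i * p.eval (x i) = 0 := by
  simp_rw [eval_eq_sum_range' (Nat.lt_succ_of_le hpn), Finset.mul_sum]
  rw [Finset.sum_comm]
  refine Finset.sum_eq_zero fun k hk => ?_
  rcases Nat.eq_zero_or_pos k with rfl | hk0
  · simp [hp0]
  · simp_rw [mul_left_comm (l _), ← Finset.mul_sum]
    rw [h k hk0 (Nat.lt_succ_iff.mp (Finset.mem_range.mp hk)), mul_zero]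

open Polynomial in
theorem eq_zero_of_sum_mul_pow_eq_zero {ι K : Type*} [Fintype ι] [Field K] (l : ι → K)
    (hl : ∀ I : Finset ι, I.Nonempty → ∑ i ∈ I, l i ≠ 0) (x : ι → K)
    (h : ∀ k, 0 < k → k ≤ Fintype.card ι → ∑ i, l i * x i ^ k = 0) : x = 0 := by
  classical
  by_contra hx
  obtain ⟨i₀, hi₀⟩ := Function.ne_iff.mp hx
  set s := x i₀
  set V := (Finset.univ.image x).erase s
  set p : K[X] := X * ∏ v ∈ V, (X - C v)
  have hpn : p.natDegree ≤ Fintype.card ι := by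
    have hV : V.card + 1 ≤ Fintype.card ι := by
      rw [Finset.card_erase_add_one (Finset.mem_image_of_mem x (Finset.mem_univ i₀))]
      exact Finset.card_image_le
    rw [natDegree_X_mul (Finset.prod_ne_zero_iff.mpr fun v _ => X_sub_C_ne_zero v),
      natDegree_finsetProd_X_sub_C_eq_card]
    omega
  have hps : p.eval s ≠ 0 := by
    simp only [p, eval_mul, eval_X, eval_prod, eval_sub, eval_C]
    exact mul_ne_zero hi₀ (Finset.prod_ne_zero_iff.mpr fun v hv =>
      sub_ne_zero.mpr fun hsv => Finset.notMem_erase s _ (hsv ▸ hv))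
  have hpx : ∀ i, x i ≠ s → p.eval (x i) = 0 := fun i hi => by
    simp only [p, eval_mul, eval_prod, eval_sub, eval_X, eval_C]
    exact mul_eq_zero_of_right _ (Finset.prod_eq_zero
      (Finset.mem_erase.mpr ⟨hi, Finset.mem_image_of_mem x (Finset.mem_univ i)⟩) (sub_self _))
  have hsum := sum_mul_eval_eq_zero_of_sum_mul_pow_eq_zero l x h p (by simp [p]) hpn
  have hterm : ∀ i, l i * p.eval (x i) = if x i = s then l i * p.eval s else 0 := fun i => by
    split_ifs with hi
    · rw [hi]
    · rw [hpx i hi, mul_zero]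
  rw [Finset.sum_congr rfl fun i _ => hterm i, ← Finset.sum_filter, ← Finset.sum_mul] at hsum
  exact mul_ne_zero (hl _ ⟨i₀, by simp [s]⟩) hps hsum

namespace MvPolynomial

variable {σ R : Type*} [CommRing R]

attribute [local instance] gradedAlgebra in
theorem homogeneousComponent_mul_of_isHomogeneous {e : ℕ} (t : ℕ) (g : MvPolynomial σ R)
    {q : MvPolynomial σ R} (hq : q.IsHomogeneous e) :
    homogeneousComponent t (g * q) = if e ≤ t then homogeneousComponent (t - e) g * q else 0 := by
  have hdec (s : ℕ) (φ : MvPolynomial σ R) :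
      (DirectSum.decompose (homogeneousSubmodule σ R) φ s : MvPolynomial σ R) =
        homogeneousComponent s φ :=
    decomposition.decompose'_apply φ s
  simpa only [hdec] using DirectSum.coe_decompose_mul_of_right_mem (homogeneousSubmodule σ R)
    (a := g) t ((mem_homogeneousSubmodule e q).mpr hq)

theorem monomial_mem_of_sum_lt_degree [Fintype σ] {I : Ideal (MvPolynomial σ R)} {N : σ → ℕ}
    (hN : ∀ i, X i ^ N i ∈ I) {m : σ →₀ ℕ} (hm : ∑ i, N i < m.degree) (c : R) :
    monomial m c ∈ I := by
  obtain ⟨i, hi⟩ : ∃ i, N i ≤ m i := by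
    by_contra! h
    rw [Finsupp.degree_eq_sum] at hm
    exact (Finset.sum_le_sum fun i _ => (h i).le).not_gt hm
  refine I.mem_of_dvd ?_ (hN i)
  rw [X_pow_eq_monomial, monomial_dvd_monomial]
  exact ⟨.inr (Finsupp.single_le_iff.mpr hi), one_dvd c⟩

theorem IsHomogeneous.mem_of_sum_lt [Fintype σ] {I : Ideal (MvPolynomial σ R)} {N : σ → ℕ}
    (hN : ∀ i, X i ^ N i ∈ I) {t : ℕ} (ht : ∑ i, N i < t) {f : MvPolynomial σ R}
    (hf : f.IsHomogeneous t) : f ∈ I := by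
  rw [f.as_sum]
  refine I.sum_mem fun m hm => monomial_mem_of_sum_lt_degree hN ?_ _
  rw [Finsupp.degree_eq_weight_one]
  exact hf (mem_support_iff.mp hm) ▸ ht

theorem finite_adjoin_of_isHomogeneous [Fintype σ] {ι : Type*} [Fintype ι]
    (w : ι → MvPolynomial σ R) (e : ι → ℕ) (he : ∀ k, 0 < e k) (hw : ∀ k, (w k).IsHomogeneous (e k))
    (hX : ∀ i, X i ∈ (Ideal.span (range w)).radical) :
    Module.Finite (adjoin R (range w)) (MvPolynomial σ R) := by
  choose N hN using hX
  set D := ∑ i, N i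
  set T : Finset (MvPolynomial σ R) :=
    ((Finsupp.finite_of_degree_le D).image (monomial · (1 : R))).toFinset
  set S := Submodule.span (adjoin R (range w)) (T : Set (MvPolynomial σ R))
  suffices hom : ∀ t (f : MvPolynomial σ R), f.IsHomogeneous t → f ∈ S by
    refine ⟨⟨T, eq_top_iff.mpr fun f _ => ?_⟩⟩
    rw [← sum_homogeneousComponent f]
    exact Submodule.sum_mem _ fun t _ => hom t _ (homogeneousComponent_isHomogeneous t f)
  intro t
  induction t using Nat.strong_induction_on with
  | _ t IH =>
  intro f hf
  rcases le_or_gt t D with htD | hDt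
  · rw [f.as_sum]
    refine Submodule.sum_mem _ fun m hm => ?_
    rw [← mul_one (coeff m f), ← smul_eq_mul, ← smul_monomial]
    refine Submodule.smul_of_tower_mem _ _ (Submodule.subset_span ?_)
    have hmt : m.degree = t := by
      rw [Finsupp.degree_eq_weight_one]
      exact hf (mem_support_iff.mp hm)
    simpa [T] using ⟨m, hmt ▸ htD, rfl⟩
  · -- in degrees above `D`, `f` is a combination of the `w k` with coefficients of lower degree
    obtain ⟨h, hfh⟩ := Ideal.mem_span_range_iff_exists_fun.mp (hf.mem_of_sum_lt hN hDt)
    rw [← (homogeneousComponent_of_mem (hf : f ∈ homogeneousSubmodule σ R t)).trans (if_pos rfl),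
      ← hfh, map_sum]
    refine Submodule.sum_mem _ fun k _ => ?_
    rw [homogeneousComponent_mul_of_isHomogeneous t _ (hw k)]
    split_ifs with hkt
    · rw [mul_comm]
      exact Submodule.smul_mem S ⟨w k, subset_adjoin (mem_range_self k)⟩
        (IH _ (by have := he k; omega) _ (homogeneousComponent_isHomogeneous _ _))
    · exact S.zero_mem

theorem exists_eval_eq_of_isIntegral {K σ : Type*} [Field K] [IsAlgClosed K] [Finite σ]
    (w : σ → MvPolynomial σ K) [Algebra.IsIntegral (adjoin K (range w)) (MvPolynomial σ K)]
    (c : σ → K) : ∃ x : σ → K, ∀ k, eval x (w k) = c k := by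
  -- `MvPolynomial σ K` is integral over `K[w]`, so the `w k` are a transcendence basis
  have hind : AlgebraicIndependent K w :=
    (Algebra.IsAlgebraic.isTranscendenceBasis_of_lift_le_trdeg_of_finite K w (by simp)).1
  let χ : adjoin K (range w) →ₐ[K] K := (aeval c).comp hind.aevalEquiv.symm.toAlgHom
  have hχ : Function.Surjective χ := fun a => ⟨algebraMap K _ a, χ.commutes a⟩
  have := RingHom.ker_isMaximal_of_surjective χ hχ
  obtain ⟨Q, hQ, hQχ⟩ := Ideal.exists_ideal_over_maximal_of_isIntegral (RingHom.ker χ)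
    (by rw [(RingHom.injective_iff_ker_eq_bot _).mp Subtype.val_injective]; exact bot_le)
  obtain ⟨x, rfl⟩ := eq_vanishingIdeal_singleton_of_isMaximal K hQ
  refine ⟨x, fun k => ?_⟩
  have hk : hind.aevalEquiv (X k) - algebraMap K _ (c k) ∈ RingHom.ker χ := by simp [χ]
  rw [← hQχ, Ideal.mem_comap, map_sub, hind.algebraMap_aevalEquiv, aeval_X,
    ← IsScalarTower.algebraMap_apply, mem_vanishingIdeal_singleton_iff] at hk
  simpa [sub_eq_zero] using hk

section WeightedPowerSum

variable {σ R : Type*} [Fintype σ] [CommSemiring R]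

noncomputable def weightedPowerSum (l : σ → R) (k : ℕ) : MvPolynomial σ R :=
  ∑ i, C (l i) * X i ^ k

theorem isHomogeneous_weightedPowerSum (l : σ → R) (k : ℕ) :
    (weightedPowerSum l k).IsHomogeneous k :=
  IsHomogeneous.sum _ _ _ fun _ _ => isHomogeneous_C_mul_X_pow _ _ _

@[simp]
theorem eval_weightedPowerSum (l x : σ → R) (k : ℕ) :
    eval x (weightedPowerSum l k) = ∑ i, l i * x i ^ k := by
  simp [weightedPowerSum]

end WeightedPowerSum

end MvPolynomial

open MvPolynomial in
theorem exists_sum_mul_pow_eq {K : Type*} [Field K] [IsAlgClosed K] {n : ℕ} (l : Fin n → K)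
    (hl : ∀ I : Finset (Fin n), I.Nonempty → ∑ i ∈ I, l i ≠ 0) (c : Fin n → K) :
    ∃ r : Fin n → K, ∀ k : Fin n, ∑ i, l i * r i ^ (k + 1 : ℕ) = c k := by
  set w : Fin n → MvPolynomial (Fin n) K := fun k => weightedPowerSum l (k + 1)
  have hX (i : Fin n) : X i ∈ (Ideal.span (range w)).radical := by
    rw [← vanishingIdeal_zeroLocus_eq_radical (K := K), mem_vanishingIdeal_iff]
    intro x hx
    obtain rfl : x = 0 := eq_zero_of_sum_mul_pow_eq_zero l hl x fun k hk hkn => by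
      rw [Fintype.card_fin] at hkn
      simpa [w, Nat.sub_add_cancel hk] using
        hx (w ⟨k - 1, by omega⟩) (Ideal.subset_span ⟨_, rfl⟩)
    simp
  have := finite_adjoin_of_isHomogeneous w (fun k => k + 1) (fun _ => Nat.succ_pos _)
    (fun k => isHomogeneous_weightedPowerSum l _) hX
  have := Algebra.IsIntegral.of_finite (adjoin K (range w)) (MvPolynomial (Fin n) K)
  obtain ⟨r, hr⟩ := exists_eval_eq_of_isIntegral w c
  exact ⟨r, fun k => by simpa [w] using hr k⟩

open Nat PowerSeries in
theorem coeff_sum_C_mul_rescale_exp {ι K : Type*} [Fintype ι] [Field K] [CharZero K]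
    (l r : ι → K) (m : ℕ) :
    coeff m (∑ i, C (l i) * rescale (r i) (exp K)) = (∑ i, l i * r i ^ m) / m ! := by
  simp [coeff_exp, div_eq_mul_inv, Finset.sum_mul, mul_assoc]

theorem stmt_0_general (d : ℕ) (l : Fin (d - 1) → ℂ)
    (hl : ∀ I : Finset (Fin (d - 1)), I.Nonempty → ∑ i ∈ I, l i ≠ 0)
    (P : PowerSeries ℂ) (hP : PowerSeries.constantCoeff P = ∑ i, l i) :
    ∃ r : Fin (d - 1) → ℂ,
      (PowerSeries.X : PowerSeries ℂ) ^ d ∣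
        P - ∑ i, PowerSeries.C (l i) * PowerSeries.rescale (r i) (PowerSeries.exp ℂ) := by
  obtain ⟨r, hr⟩ := exists_sum_mul_pow_eq l hl fun k =>
    (Nat.factorial (k + 1) : ℂ) * PowerSeries.coeff (k + 1) P
  refine ⟨r, PowerSeries.X_pow_dvd_iff.mpr fun m hm => ?_⟩
  rw [map_sub, coeff_sum_C_mul_rescale_exp, sub_eq_zero]
  cases m with
  | zero => simpa using hP
  | succ m =>
    rw [hr ⟨m, by omega⟩]
    exact (mul_div_cancel_left₀ _ (Nat.cast_ne_zero.mpr (Nat.factorial_ne_zero _))).symm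

theorem stmt_0 (d : ℕ) (hd : 2 ≤ d) (l : Fin (d - 1) → ℂ)
    (hl : ∀ I : Finset (Fin (d - 1)), I.Nonempty → ∑ i ∈ I, l i ≠ 0)
    (P : PowerSeries ℂ) (hP : PowerSeries.constantCoeff P = ∑ i, l i) :
    ∃ r : Fin (d - 1) → ℂ,
      (PowerSeries.X : PowerSeries ℂ) ^ d ∣
        P - ∑ i, PowerSeries.C (l i) * PowerSeries.rescale (r i) (PowerSeries.exp ℂ) :=
  stmt_0_general d l hl P hP
end

section
/- Let F : ℂⁿ → ℂᵐ be a polynomial map of degree ≤ 3, and β, γ ∈ ℂⁿ with γ ≠ 0. If the map μ ↦ F(β + μγ) is injective on ℂ and (JF)(α) · γ ≠ 0 for all α ∈ {β + μγ : μ ∈ ℂ}, then there exists v ∈ ℂᵐ such that ∑_{j=1}^m v_j · d/dT(F_j(β + Tγ)) = 1, i.e., F restricted to the line is linearly rectifiable. -/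
open MvPolynomial

/-- The Jacobian matrix of a polynomial map `F : ℂⁿ → ℂᵐ`, evaluated at `α`. -/
noncomputable def jacEval {n m : ℕ} (F : Fin m → MvPolynomial (Fin n) ℂ)
    (α : Fin n → ℂ) : Matrix (Fin m) (Fin n) ℂ :=
  Matrix.of fun i j => eval α (pderiv j (F i))

/-- The restriction of (the `j`-th component of) `F` to the line `β + ℂ·γ`,
as a polynomial in one variable `T`. -/
noncomputable def lineComp {n m : ℕ} (F : Fin m → MvPolynomial (Fin n) ℂ)
    (β γ : Fin n → ℂ) (j : Fin m) : Polynomial ℂ :=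
  MvPolynomial.aeval (fun k => Polynomial.C (β k) + Polynomial.C (γ k) * Polynomial.X) (F j)

/-!
If `1` is not a linear combination of the derivatives `f_j'` of the restrictions
`f_j = F_j(β + Tγ)`, some linear functional `ψ` on `ℂ[T]` with `ψ 1 = 1` kills every `f_j'`.
As `deg f_j' ≤ 2`, only `q = ψ T` and `p = ψ T²` matter. If `p = q²`, then `ψ` is evaluation at
`q` on quadratics, so all `f_j'` vanish at `q`, against the Jacobian condition. Otherwise, with
`s² = 3 (p - q²)`, `ψ` is the mean value over the segment `[q - s, q + s]` on quadratics, so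
`f_j (q + s) = f_j (q - s)` for every `j`, against injectivity on the line.
-/

open scoped Polynomial

namespace MvPolynomial

variable {R σ : Type*} [CommSemiring R]

theorem eval_aeval (g : σ → R[X]) (μ : R) (P : MvPolynomial σ R) :
    (aeval g P).eval μ = eval (fun k => (g k).eval μ) P := by
  rw [← coe_aeval_eq_eval, ← Polynomial.coe_aeval_eq_eval, ← AlgHom.comp_apply, comp_aeval]
  rfl

theorem derivative_aeval [Fintype σ] (g : σ → R[X]) (P : MvPolynomial σ R) :
    Polynomial.derivative (aeval g P) =
      ∑ k, aeval g (pderiv k P) * Polynomial.derivative (g k) := by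
  classical
  induction P using MvPolynomial.induction_on with
  | C a => simp
  | add p q hp hq => simp only [map_add, hp, hq, add_mul, Finset.sum_add_distrib]
  | mul_X p i hp =>
    simp only [map_mul, aeval_X, Polynomial.derivative_mul, hp, Finset.sum_mul, mul_assoc,
      add_comm, Derivation.leibniz, pderiv_X, Pi.single_apply, smul_eq_mul, mul_ite, mul_one,
      mul_zero, map_add, apply_ite (aeval g), map_zero, add_mul, ite_mul, zero_mul,
      Finset.sum_add_distrib, Finset.sum_ite_eq, Finset.mem_univ, ↓reduceIte]
    congr 1
    exact Finset.sum_congr rfl fun _ _ => by ring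

end MvPolynomial

namespace Polynomial

variable {K : Type*} [Field K]

theorem apply_eq_of_natDegree_le_two (ψ : K[X] →ₗ[K] K) (hψ : ψ 1 = 1) {g : K[X]}
    (hg : g.natDegree ≤ 2) :
    ψ g = g.coeff 0 + g.coeff 1 * ψ X + g.coeff 2 * ψ (X ^ 2) := by
  conv_lhs => rw [g.as_sum_range_C_mul_X_pow' (n := 3) (by omega)]
  simp [Finset.sum_range_succ, ← smul_eq_C_mul, hψ]

theorem eval_eq_of_natDegree_le_three {f : K[X]} (hf : f.natDegree ≤ 3) (x : K) :
    f.eval x = f.coeff 0 + f.coeff 1 * x + f.coeff 2 * x ^ 2 + f.coeff 3 * x ^ 3 := by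
  rw [eval_eq_sum_range' (n := 4) (by omega)]
  simp [Finset.sum_range_succ]

theorem apply_eq_eval_of_apply_X_sq (ψ : K[X] →ₗ[K] K) (hψ : ψ 1 = 1)
    (hsq : ψ (X ^ 2) = ψ X ^ 2) {g : K[X]} (hg : g.natDegree ≤ 2) :
    ψ g = g.eval (ψ X) := by
  rw [apply_eq_of_natDegree_le_two ψ hψ hg, eval_eq_of_natDegree_le_three (by omega),
    coeff_eq_zero_of_natDegree_lt (by omega : g.natDegree < 3), hsq]
  ring

theorem eval_add_sub_eval_sub (ψ : K[X] →ₗ[K] K) (hψ : ψ 1 = 1) {s : K}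
    (hs : s ^ 2 = 3 * (ψ (X ^ 2) - ψ X ^ 2)) {f : K[X]} (hf : f.natDegree ≤ 3) :
    f.eval (ψ X + s) - f.eval (ψ X - s) = 2 * s * ψ (derivative f) := by
  rw [apply_eq_of_natDegree_le_two ψ hψ ((natDegree_derivative_le f).trans (by omega)),
    eval_eq_of_natDegree_le_three hf, eval_eq_of_natDegree_le_three hf]
  simp only [coeff_derivative]
  push_cast
  linear_combination 2 * s * f.coeff 3 * hs

theorem exists_sum_C_mul_derivative_eq_one [IsAlgClosed K] (h2 : (2 : K) ≠ 0)
    (h3 : (3 : K) ≠ 0) {ι : Type*} [Fintype ι] {f : ι → K[X]}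
    (hdeg : ∀ j, (f j).natDegree ≤ 3) (hinj : Function.Injective fun μ j => (f j).eval μ)
    (hder : ∀ μ, ∃ j, (derivative (f j)).eval μ ≠ 0) :
    ∃ v : ι → K, ∑ j, C (v j) * derivative (f j) = 1 := by
  by_contra h
  have h1_notMem : (1 : K[X]) ∉ Submodule.span K (Set.range fun j => derivative (f j)) := by
    rw [Submodule.mem_span_range_iff_exists_fun]
    rintro ⟨v, hv⟩
    exact h ⟨v, by simpa [smul_eq_C_mul] using hv⟩
  obtain ⟨φ, hφ1, hφ⟩ := Submodule.exists_le_ker_of_notMem h1_notMem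
  set ψ := (φ 1)⁻¹ • φ
  have hψ1 : ψ 1 = 1 := inv_mul_cancel₀ hφ1
  have hψ : ∀ j, ψ (derivative (f j)) = 0 := fun j => by
    simp [ψ, LinearMap.mem_ker.mp (hφ (Submodule.subset_span ⟨j, rfl⟩))]
  have hdeg' : ∀ j, (derivative (f j)).natDegree ≤ 2 := fun j =>
    (natDegree_derivative_le _).trans (Nat.sub_le_sub_right (hdeg j) 1)
  obtain ⟨s, hs⟩ := IsAlgClosed.exists_pow_nat_eq (3 * (ψ (X ^ 2) - ψ X ^ 2)) two_pos
  rcases eq_or_ne s 0 with rfl | hs0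
  · have hsq : ψ (X ^ 2) = ψ X ^ 2 := by
      refine sub_eq_zero.mp ((mul_eq_zero.mp ?_).resolve_left h3)
      rw [← hs]
      ring
    obtain ⟨j, hj⟩ := hder (ψ X)
    exact hj (by rw [← apply_eq_eval_of_apply_X_sq ψ hψ1 hsq (hdeg' j), hψ j])
  · have hsym : ψ X + s = ψ X - s := hinj <| by
      funext j
      exact sub_eq_zero.mp <| by rw [eval_add_sub_eval_sub ψ hψ1 hs (hdeg j), hψ j, mul_zero]
    exact hs0 ((mul_eq_zero.mp (by linear_combination hsym : 2 * s = 0)).resolve_left h2)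

end Polynomial

theorem eval_C_add_C_mul_X_eq_add_smul {R σ : Type*} [CommSemiring R] (β γ : σ → R) (μ : R) :
    (fun k => (Polynomial.C (β k) + Polynomial.C (γ k) * Polynomial.X).eval μ) = β + μ • γ := by
  ext k
  simp only [Polynomial.eval_add, Polynomial.eval_mul, Polynomial.eval_C, Polynomial.eval_X,
    Pi.add_apply, Pi.smul_apply, smul_eq_mul, mul_comm]

section lineComp

variable {n m : ℕ} (F : Fin m → MvPolynomial (Fin n) ℂ) (β γ : Fin n → ℂ)

theorem lineComp_eval (j : Fin m) (μ : ℂ) :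
    (lineComp F β γ j).eval μ = eval (β + μ • γ) (F j) := by
  rw [lineComp, eval_aeval, eval_C_add_C_mul_X_eq_add_smul]

theorem lineComp_derivative_eval (j : Fin m) (μ : ℂ) :
    (lineComp F β γ j).derivative.eval μ = (jacEval F (β + μ • γ)).mulVec γ j := by
  simp only [lineComp, derivative_aeval, Polynomial.eval_finsetSum, Polynomial.eval_mul,
    eval_aeval, eval_C_add_C_mul_X_eq_add_smul]
  simp [jacEval, Matrix.mulVec, dotProduct]

theorem lineComp_natDegree_le {d : ℕ} (hdeg : ∀ i, (F i).totalDegree ≤ d) (j : Fin m) :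
    (lineComp F β γ j).natDegree ≤ d := by
  simpa [lineComp] using aeval_natDegree_le (n := 1) (F j) (hdeg j) _ fun k =>
    (Polynomial.natDegree_add_le _ _).trans
      (max_le (by simp) ((Polynomial.natDegree_C_mul_le _ _).trans (by simp)))

end lineComp

theorem stmt_7_general (n m : ℕ) (F : Fin m → MvPolynomial (Fin n) ℂ)
    (hdeg : ∀ i, (F i).totalDegree ≤ 3)
    (β γ : Fin n → ℂ)
    (hinj : Function.Injective (fun μ : ℂ => fun i => eval (β + μ • γ) (F i)))
    (hjac : ∀ α : Fin n → ℂ, (∃ μ : ℂ, α = β + μ • γ) → (jacEval F α).mulVec γ ≠ 0) :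
    ∃ v : Fin m → ℂ,
      ∑ j, Polynomial.C (v j) * Polynomial.derivative (lineComp F β γ j) = 1 := by
  refine Polynomial.exists_sum_C_mul_derivative_eq_one two_ne_zero three_ne_zero
    (lineComp_natDegree_le F β γ hdeg) ?_ fun μ => ?_
  · simpa only [lineComp_eval] using hinj
  · by_contra! h
    exact hjac _ ⟨μ, rfl⟩ (funext fun j => by rw [← lineComp_derivative_eval, h j]; rfl)

theorem stmt_7 (n m : ℕ) (F : Fin m → MvPolynomial (Fin n) ℂ)
    (hdeg : ∀ i, (F i).totalDegree ≤ 3)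
    (β γ : Fin n → ℂ) (hγ : γ ≠ 0)
    (hinj : Function.Injective (fun μ : ℂ => fun i => eval (β + μ • γ) (F i)))
    (hjac : ∀ α : Fin n → ℂ, (∃ μ : ℂ, α = β + μ • γ) → (jacEval F α).mulVec γ ≠ 0) :
    ∃ v : Fin m → ℂ,
      ∑ j, Polynomial.C (v j) * Polynomial.derivative (lineComp F β γ j) = 1 :=
  stmt_7_general n m F hdeg β γ hinj hjac
end

section
/- Let d ≥ 2 and let P ∈ ℂ[[T]] have constant term d−1. Then there exist r₁, ..., r_{d-1} ∈ ℂ such that P − ∑_{i=1}^{d-1} exp(r_i T) is divisible by T^d; moreover the r_i can be taken to be the roots of a monic polynomial of degree d−1 whose coefficients are polynomials in the coefficients of P. -/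
/-!
Put `p k = k! · [T^k] P`. The divisibility says exactly that `∑ rᵢ ^ k = p k` for `0 < k < d`
(for `k = 0` both sides are `d - 1`). Newton's identities express the elementary symmetric
functions `e k` of the `rᵢ` as polynomials with rational coefficients in `p 1, …, p k`; take the
`rᵢ` to be the roots of `X ^ (d-1) - e 1 X ^ (d-2) + ⋯ ± e (d-1)`. Since `e 0 = 1`, the same
identities conversely determine the power sums from the `e k`, so the roots have power sums `p k`.
-/

open Finset Polynomial

theorem Finset.Nat.sum_antidiagonal_filter_fst_lt {M : Type*} [AddCommMonoid M] (f : ℕ × ℕ → M)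
    (n : ℕ) : ∑ a ∈ antidiagonal n with a.1 < n, f a = ∑ i ∈ range n, f (i, n - i) := by
  rw [sum_filter, Nat.sum_antidiagonal_eq_sum_range_succ_mk, sum_range_succ, if_neg (lt_irrefl n),
    add_zero]
  exact sum_congr rfl fun i hi => if_pos (mem_range.mp hi)

theorem Multiset.exists_fin_map_eq {α : Type*} {s : Multiset α} {n : ℕ} (hs : card s = n) :
    ∃ f : Fin n → α, univ.val.map f = s := by
  subst hs
  refine ⟨fun i => s.toList.get (i.cast (by simp)), ?_⟩
  rw [Fin.univ_val_map]
  conv_rhs => rw [← s.coe_toList]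
  exact congrArg _ (List.ext_getElem (by simp) fun i _ _ => by simp)

theorem Multiset.natCast_mul_esymm_eq_sum {R : Type*} [CommRing R] (s : Multiset R) (k : ℕ) :
    (k : R) * s.esymm k =
      (-1) ^ (k + 1) * ∑ i ∈ Finset.range k, (-1) ^ i * s.esymm i * (s.map (· ^ (k - i))).sum := by
  obtain ⟨f, hf⟩ := exists_fin_map_eq (s := s) rfl
  rw [← hf]
  have := congrArg (MvPolynomial.aeval f) (MvPolynomial.mul_esymm_eq_sum (Fin (card s)) ℤ k)
  simpa only [Finset.Nat.sum_antidiagonal_filter_fst_lt, MvPolynomial.aeval_esymm_eq_multiset_esymm,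
    MvPolynomial.psum, map_mul, map_sum, map_pow, map_neg, map_one, map_natCast,
    MvPolynomial.aeval_X,
    Multiset.map_map, Function.comp_def, Finset.sum_map_val] using this

theorem eq_of_newton_recurrence {R : Type*} [CommRing R] {e p p' : ℕ → R} {N : ℕ} (he : e 0 = 1)
    (hp : ∀ k ≤ N, (k : R) * e k = (-1) ^ (k + 1) * ∑ i ∈ range k, (-1) ^ i * e i * p (k - i))
    (hp' : ∀ k ≤ N, (k : R) * e k = (-1) ^ (k + 1) * ∑ i ∈ range k, (-1) ^ i * e i * p' (k - i))
    {k : ℕ} (hk : 0 < k) (hkN : k ≤ N) : p k = p' k := by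
  induction k using Nat.strong_induction_on with
  | _ k ih =>
  obtain ⟨j, rfl⟩ := Nat.exists_eq_add_one.mpr hk
  have hsum := ((isUnit_neg_one (α := R)).pow (j + 2)).mul_left_cancel
    ((hp (j + 1) hkN).symm.trans (hp' (j + 1) hkN))
  rw [sum_range_succ', sum_range_succ'] at hsum
  have hlower : ∀ i ∈ range j, (-1) ^ (i + 1) * e (i + 1) * p (j + 1 - (i + 1)) =
      (-1) ^ (i + 1) * e (i + 1) * p' (j + 1 - (i + 1)) := by
    intro i hi
    have hi := mem_range.mp hi
    rw [ih (j + 1 - (i + 1)) (by omega) (by omega) (by omega)]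
  rw [sum_congr rfl hlower] at hsum
  simpa [he] using hsum

section NewtonEsymm

variable {R S : Type*} [CommRing R] [Algebra ℚ R] [CommRing S] [Algebra ℚ S]

/-- The `k`-th elementary symmetric function of any family whose power sums are `p 1, p 2, …`,
computed from Newton's identities; `p 0` is not used. -/
noncomputable def newtonEsymm (p : ℕ → R) : ℕ → R
  | 0 => 1
  | k + 1 => (k + 1 : ℚ)⁻¹ •
      ((-1) ^ (k + 2) * ∑ i : Fin (k + 1), (-1) ^ (i : ℕ) * newtonEsymm p i * p (k + 1 - i))

theorem newtonEsymm_zero (p : ℕ → R) : newtonEsymm p 0 = 1 := by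
  rw [newtonEsymm]

theorem natCast_mul_newtonEsymm_eq_sum (p : ℕ → R) (k : ℕ) :
    (k : R) * newtonEsymm p k =
      (-1) ^ (k + 1) * ∑ i ∈ range k, (-1) ^ i * newtonEsymm p i * p (k - i) := by
  cases k with
  | zero => simp
  | succ k =>
    rw [newtonEsymm,
      ← Fin.sum_univ_eq_sum_range fun i => (-1) ^ i * newtonEsymm p i * p (k + 1 - i),
      Algebra.smul_def, ← mul_assoc, ← map_natCast (algebraMap ℚ R), ← map_mul, Nat.cast_succ,
      mul_inv_cancel₀ (Nat.cast_add_one_ne_zero k), map_one, one_mul]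

theorem map_newtonEsymm (f : R →+* S) (p : ℕ → R) (k : ℕ) :
    f (newtonEsymm p k) = newtonEsymm (f ∘ p) k := by
  induction k using Nat.strong_induction_on with
  | _ k ih =>
  cases k with
  | zero => simp [newtonEsymm_zero]
  | succ k =>
    rw [newtonEsymm, newtonEsymm, map_rat_smul]
    simp only [map_mul, map_sum, map_pow, map_neg, map_one, Function.comp_apply]
    congr 3 with i
    rw [ih i (by omega)]

end NewtonEsymm

theorem Polynomial.exists_monic_esymm_roots {K : Type*} [Field K] [IsAlgClosed K] (N : ℕ)
    {e : ℕ → K} (he : e 0 = 1) :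
    ∃ g : K[X], g.Monic ∧ g.natDegree = N ∧ g.roots.card = N ∧
      (∀ k < N, g.coeff k = (-1) ^ (N - k) * e (N - k)) ∧ ∀ m ≤ N, g.roots.esymm m = e m := by
  classical
  set g : K[X] := X ^ N + ofFn N fun k => (-1) ^ (N - k) * e (N - k)
  have hmonic : g.Monic := monic_X_pow_add (ofFn_degree_lt _)
  have hdeg : g.natDegree = N := by
    rw [natDegree_add_eq_left_of_degree_lt] <;> simp [ofFn_degree_lt]
  have hcard : g.roots.card = N := by
    rw [splits_iff_card_roots.mp (IsAlgClosed.splits g), hdeg]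
  have hcoeff : ∀ k < N, g.coeff k = (-1) ^ (N - k) * e (N - k) := fun k hk => by
    simp [g, coeff_X_pow, hk.ne, hk]
  refine ⟨g, hmonic, hdeg, hcard, hcoeff, fun m hm => ?_⟩
  rcases m.eq_zero_or_pos with rfl | hm0
  · simp [he, Multiset.esymm]
  have hvieta := coeff_eq_esymm_roots_of_card (hcard.trans hdeg.symm) (k := N - m) (by omega)
  rw [hmonic.leadingCoeff, one_mul, hdeg, hcoeff _ (by omega), Nat.sub_sub_self hm] at hvieta
  exact ((isUnit_neg_one.pow m).mul_left_cancel hvieta).symm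

theorem PowerSeries.X_pow_dvd_sub_sum_rescale_exp {A ι : Type*} [CommRing A] [Algebra ℚ A]
    (s : Finset ι) (r : ι → A) (P : PowerSeries A) (n : ℕ)
    (h : ∀ k < n, (k.factorial : A) * coeff k P = ∑ i ∈ s, r i ^ k) :
    X ^ n ∣ P - ∑ i ∈ s, rescale (r i) (exp A) := by
  refine X_pow_dvd_iff.mpr fun k hk => ?_
  rw [map_sub, map_sum]
  simp only [coeff_rescale, coeff_exp]
  rw [← sum_mul, ← h k hk, mul_comm, ← mul_assoc, ← map_natCast (algebraMap ℚ A), ← map_mul,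
    one_div, inv_mul_cancel₀ (by positivity), map_one, one_mul, sub_self]

theorem stmt_9_general (d : ℕ) :
    ∃ q : Fin (d - 1) → MvPolynomial (Fin (d - 1)) ℂ,
      ∀ P : PowerSeries ℂ, PowerSeries.constantCoeff P = (d - 1 : ℂ) →
        ∃ r : Fin (d - 1) → ℂ,
          ((PowerSeries.X : PowerSeries ℂ) ^ d ∣
            P - ∑ i, PowerSeries.rescale (r i) (PowerSeries.exp ℂ)) ∧
          ∃ g : Polynomial ℂ, g.Monic ∧ g.natDegree = d - 1 ∧
            (∀ k : Fin (d - 1), g.coeff k =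
              MvPolynomial.eval
                (fun j : Fin (d - 1) =>
                  (((j : ℕ) + 1).factorial : ℂ) * PowerSeries.coeff ((j : ℕ) + 1) P)
                (q k)) ∧
            ∀ i, g.IsRoot (r i) := by
  -- the variable `j` stands for the power sum `p (j + 1)`
  let pX : ℕ → MvPolynomial (Fin (d - 1)) ℂ := fun i =>
    if h : i - 1 < d - 1 then MvPolynomial.X ⟨i - 1, h⟩ else 0
  refine ⟨fun k => (-1) ^ (d - 1 - k) * newtonEsymm pX (d - 1 - k), fun P hP => ?_⟩
  set p : ℕ → ℂ := fun i => MvPolynomial.eval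
    (fun j : Fin (d - 1) => (((j : ℕ) + 1).factorial : ℂ) * PowerSeries.coeff ((j : ℕ) + 1) P)
    (pX i) with hp_def
  have hp : ∀ k, 0 < k → k ≤ d - 1 → p k = k.factorial * PowerSeries.coeff k P := by
    intro k hk hkd
    simp [hp_def, pX, show k - 1 < d - 1 by omega, Nat.sub_add_cancel hk]
  obtain ⟨g, hmonic, hdeg, hcard, hcoeff, hesymm⟩ :=
    exists_monic_esymm_roots (d - 1) (newtonEsymm_zero p)
  obtain ⟨r, hr⟩ := Multiset.exists_fin_map_eq hcard
  have hroots : ∀ k ≤ d - 1, (k : ℂ) * newtonEsymm p k =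
      (-1) ^ (k + 1) * ∑ i ∈ range k, (-1) ^ i * newtonEsymm p i * ∑ j, r j ^ (k - i) := by
    intro k hk
    rw [← hesymm k hk, g.roots.natCast_mul_esymm_eq_sum k]
    refine congrArg _ (sum_congr rfl fun i hi => ?_)
    rw [hesymm i ((mem_range.mp hi).le.trans hk), ← hr, Multiset.map_map, Function.comp_def,
      sum_map_val]
  have hpsum : ∀ k, 0 < k → k ≤ d - 1 → ∑ i, r i ^ k = p k := fun k =>
    eq_of_newton_recurrence (p := fun m => ∑ i, r i ^ m) (newtonEsymm_zero p) hroots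
      (fun k _ => natCast_mul_newtonEsymm_eq_sum p k)
  refine ⟨r, PowerSeries.X_pow_dvd_sub_sum_rescale_exp _ _ _ _ fun k hk => ?_, g, hmonic, hdeg,
    fun k => ?_, fun i => ?_⟩
  · rcases k.eq_zero_or_pos with rfl | hk0
    · simp [hP, Nat.cast_sub (show 1 ≤ d by omega)]
    · rw [hpsum k hk0 (by omega), hp k hk0 (by omega)]
  · rw [hcoeff k k.isLt, map_mul, map_pow, map_neg, map_one, map_newtonEsymm]
    rfl
  · exact isRoot_of_mem_roots (hr ▸ Multiset.mem_map_of_mem _ (mem_univ i))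

theorem stmt_9 (d : ℕ) (hd : 2 ≤ d) :
    ∃ q : Fin (d - 1) → MvPolynomial (Fin (d - 1)) ℂ,
      ∀ P : PowerSeries ℂ, PowerSeries.constantCoeff P = (d - 1 : ℂ) →
        ∃ r : Fin (d - 1) → ℂ,
          ((PowerSeries.X : PowerSeries ℂ) ^ d ∣
            P - ∑ i, PowerSeries.rescale (r i) (PowerSeries.exp ℂ)) ∧
          ∃ g : Polynomial ℂ, g.Monic ∧ g.natDegree = d - 1 ∧
            (∀ k : Fin (d - 1), g.coeff k =
              MvPolynomial.eval
                (fun j : Fin (d - 1) =>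
                  (((j : ℕ) + 1).factorial : ℂ) * PowerSeries.coeff ((j : ℕ) + 1) P)
                (q k)) ∧
            ∀ i, g.IsRoot (r i) :=
  stmt_9_general d
end

section
/- Let F : ℂⁿ → ℂⁿ be a polynomial map of degree ≤ 2 such that det JF is a constant c ∈ ℂ. Then for every s ∈ ℕ, all α₁, ..., α_s ∈ ℂⁿ and all b₁, ..., b_s ∈ ℂ, det(∑_{i=1}^s b_i · (JF)(α_i)) = (∑_{i=1}^s b_i)ⁿ · c. -/
/-!
Since `deg F ≤ 2`, every entry of `JF` is affine, so `JF(x) = A + L x` with `A = JF(0)` and `L`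
linear, and `det (A + L x) = c` for all `x`. For `t ≠ 0`, `t • A + L v = t • (A + L (t⁻¹ • v))`
has determinant `tⁿ c`, and by continuity in `t` this persists at `t = 0`. Finally,
`∑ bᵢ JF(αᵢ) = (∑ bᵢ) • A + L (∑ bᵢ αᵢ)`.
-/

open MvPolynomial

/-- The Jacobian matrix of a polynomial map, as a matrix of polynomials. -/
noncomputable def jacPoly {n m : ℕ} (F : Fin m → MvPolynomial (Fin n) ℂ) :
    Matrix (Fin m) (Fin n) (MvPolynomial (Fin n) ℂ) :=
  Matrix.of fun i j => pderiv j (F i)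

namespace MvPolynomial

variable {R σ : Type*} [CommSemiring R]

theorem totalDegree_pderiv_le (p : MvPolynomial σ R) (i : σ) :
    (pderiv i p).totalDegree ≤ p.totalDegree - 1 := by
  refine Finset.sup_le fun m hm => ?_
  have hmem : m + Finsupp.single i 1 ∈ p.support := by
    rw [mem_support_iff, coeff_pderiv] at hm
    exact mem_support_iff.mpr (left_ne_zero_of_mul hm)
  have := le_totalDegree hmem
  rw [Finsupp.sum_add_index' (fun _ => rfl) (fun _ _ _ => rfl),
    Finsupp.sum_single_index rfl] at this
  omega

theorem eval_eq_of_totalDegree_le_one [Fintype σ] {p : MvPolynomial σ R}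
    (hp : p.totalDegree ≤ 1) (x : σ → R) :
    eval x p = coeff 0 p + ∑ k, coeff (Finsupp.single k 1) p * x k := by
  classical
  have hsub : p.support ⊆ insert 0 (Finset.univ.image fun k => Finsupp.single k 1) := by
    intro d hd
    rcases Nat.le_one_iff_eq_zero_or_eq_one.mp ((le_totalDegree hd).trans hp) with h | h
    · simp [(Finsupp.degree_eq_zero_iff d).mp h]
    · obtain ⟨k, rfl⟩ := (Finsupp.sum_eq_one_iff d).mp h
      simp
  rw [eval_eq', Finset.sum_subset hsub fun d _ hd => by rw [notMem_support_iff.mp hd, zero_mul],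
    Finset.sum_insert (by simp [eq_comm]),
    Finset.sum_image fun _ _ _ _ h => Finsupp.single_left_injective one_ne_zero h]
  simp [Finsupp.single_apply, Finset.prod_ite_eq]

end MvPolynomial

theorem Matrix.det_smul_add_of_forall_det_add_eq {𝕜 ι V : Type*} [NontriviallyNormedField 𝕜]
    [Fintype ι] [DecidableEq ι] [AddCommGroup V] [Module 𝕜 V]
    (A : Matrix ι ι 𝕜) (L : V →ₗ[𝕜] Matrix ι ι 𝕜) {c : 𝕜} (h : ∀ x, (A + L x).det = c)
    (t : 𝕜) (v : V) : (t • A + L v).det = t ^ Fintype.card ι * c := by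
  have hne : ∀ t ≠ 0, (t • A + L v).det = t ^ Fintype.card ι * c := fun t ht => by
    rw [← h (t⁻¹ • v), ← Matrix.det_smul, smul_add, map_smul, smul_smul, mul_inv_cancel₀ ht,
      one_smul]
  exact congrFun ((continuous_id.smul continuous_const |>.add continuous_const).matrix_det
    |>.ext_on (dense_compl_singleton 0) (by fun_prop) hne) t

section Jacobian

variable {m n : ℕ} (F : Fin m → MvPolynomial (Fin n) ℂ)

noncomputable def jacLinear : (Fin n → ℂ) →ₗ[ℂ] Matrix (Fin m) (Fin n) ℂ where
  toFun x := Matrix.of fun i j => ∑ k, coeff (Finsupp.single k 1) (pderiv j (F i)) * x k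
  map_add' x y := by ext; simp [mul_add, Finset.sum_add_distrib]
  map_smul' r x := by ext; simp [Finset.mul_sum, mul_left_comm]

theorem jacEval_eq_add_jacLinear (hdeg : ∀ i, (F i).totalDegree ≤ 2) (x : Fin n → ℂ) :
    jacEval F x = jacEval F 0 + jacLinear F x := by
  have hpd : ∀ i j, (pderiv j (F i)).totalDegree ≤ 1 := fun i j =>
    (totalDegree_pderiv_le _ _).trans (by have := hdeg i; omega)
  ext i j
  simp [jacEval, jacLinear, eval_eq_of_totalDegree_le_one (hpd i j), constantCoeff]

end Jacobian

theorem det_jacEval {n : ℕ} {F : Fin n → MvPolynomial (Fin n) ℂ} {c : ℂ}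
    (hK : (jacPoly F).det = C c) (x : Fin n → ℂ) : (jacEval F x).det = c := by
  rw [show jacEval F x = (eval x).mapMatrix (jacPoly F) from rfl, ← RingHom.map_det, hK, eval_C]

theorem stmt_10 (n : ℕ) (F : Fin n → MvPolynomial (Fin n) ℂ)
    (hdeg : ∀ i, (F i).totalDegree ≤ 2)
    (c : ℂ) (hK : (jacPoly F).det = MvPolynomial.C c) :
    ∀ (s : ℕ) (α : Fin s → Fin n → ℂ) (b : Fin s → ℂ),
      (∑ i, b i • jacEval F (α i)).det = (∑ i, b i) ^ n * c := by
  intro s α b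
  have hsum : ∑ i, b i • jacEval F (α i)
      = (∑ i, b i) • jacEval F 0 + jacLinear F (∑ i, b i • α i) := by
    simp only [jacEval_eq_add_jacLinear F hdeg (α _), smul_add, Finset.sum_add_distrib,
      Finset.sum_smul, map_sum, map_smul]
  have hdet x : (jacEval F 0 + jacLinear F x).det = c := by
    rw [← jacEval_eq_add_jacLinear F hdeg, det_jacEval hK]
  rw [hsum, Matrix.det_smul_add_of_forall_det_add_eq _ _ hdet, Fintype.card_fin]
end

section
/- Let f ∈ ℂ[X₁,...,Xₙ] be a polynomial of total degree ≤ d. If f(a) = 0 for every a ∈ ℕⁿ with a₁ + a₂ + ⋯ + aₙ ≤ d, then f = 0. -/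
open MvPolynomial

lemma aux_finsupp_deg {σ : Type*} (u : σ →₀ ℕ) :
    (∑ j ∈ u.support, u j) = u.sum fun _ e => e := rfl

lemma aux_deg_add {σ : Type*} (i : σ) (m : σ →₀ ℕ) :
    ((Finsupp.single i 1 + m).sum fun _ e => e) = 1 + m.sum fun _ e => e := by
  rw [Finsupp.sum_add_index' (fun _ => rfl) (fun _ _ _ => rfl), Finsupp.sum_single_index rfl]

lemma aux_eq_C {σ : Type*} {R : Type*} [CommSemiring R] (p : MvPolynomial σ R)
    (hp : p.totalDegree = 0) : p = C (coeff 0 p) := by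
  classical
  ext m
  by_cases hm : m = 0
  · subst hm; simp
  · obtain ⟨x, hx⟩ := Finsupp.ne_iff.mp hm
    simp only [Finsupp.coe_zero, Pi.zero_apply] at hx
    have hxs : x ∈ m.support := Finsupp.mem_support_iff.mpr hx
    have h1 : 0 < ∑ i ∈ m.support, m i :=
      lt_of_lt_of_le (Nat.pos_of_ne_zero hx) (Finset.single_le_sum (fun _ _ => Nat.zero_le _) hxs)
    have h2 := coeff_eq_zero_of_totalDegree_lt (f := p) (d := m) (by omega)
    rw [h2, coeff_C, if_neg (fun hc => hm hc.symm)]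

/-- Lower bound for the total degree of `(X i - C c) * q`. -/
lemma aux_td_lower {σ : Type*} {R : Type*} [CommRing R] [DecidableEq σ] (i : σ) (c : R)
    (q : MvPolynomial σ R) (hq : q ≠ 0) :
    q.totalDegree + 1 ≤ ((X i - C c) * q).totalDegree := by
  have hsup : q.support.Nonempty := by
    rwa [Finset.nonempty_iff_ne_empty, ne_eq, support_eq_empty]
  obtain ⟨m, hm, hmdeg⟩ := Finset.exists_mem_eq_sup q.support hsup
    (fun s => s.sum fun _ e => e)
  have hdq : q.totalDegree = m.sum fun _ e => e := by rw [totalDegree, hmdeg]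
  have hcoeff : coeff (Finsupp.single i 1 + m) ((X i - C c) * q) = coeff m q := by
    rw [sub_mul, coeff_sub, coeff_X_mul]
    have h0 : coeff (Finsupp.single i 1 + m) q = 0 := by
      apply coeff_eq_zero_of_totalDegree_lt
      rw [aux_finsupp_deg, aux_deg_add]
      omega
    rw [coeff_C_mul, h0, mul_zero, sub_zero]
  have hmem : (Finsupp.single i 1 + m) ∈ ((X i - C c) * q).support := by
    rw [mem_support_iff, hcoeff]
    exact mem_support_iff.mp hm
  have hle := le_totalDegree hmem
  have hsum := aux_deg_add i m
  omega

lemma aux_vanish (n : ℕ) : ∀ (d : ℕ) (f : MvPolynomial (Fin n) ℂ) (c : Fin n → ℕ),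
    f.totalDegree ≤ d →
    (∀ a : Fin n → ℕ, ∑ i, a i ≤ d →
      MvPolynomial.eval (fun i => ((c i + a i : ℕ) : ℂ)) f = 0) →
    f = 0 := by
  induction n with
  | zero =>
    intro d f c _ h
    obtain ⟨x, rfl⟩ := C_surjective (Fin 0) f
    have := h 0 (by simp)
    simpa using this
  | succ n ih =>
    intro d
    induction d using Nat.strong_induction_on with
    | _ d ihd =>
    intro f c hdeg h
    match d with
    | 0 =>
      have hf : f = C (f.coeff 0) := aux_eq_C f (Nat.le_zero.mp hdeg)
      have := h 0 (by simp)
      rw [hf] at this ⊢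
      simpa using this
    | d + 1 =>
      set g := MvPolynomial.finSuccEquiv ℂ n f with hg
      set y : MvPolynomial (Fin n) ℂ := C ((c 0 : ℂ)) with hy
      -- the restriction of f to X 0 = c 0
      set r : MvPolynomial (Fin n) ℂ := g.eval y with hr
      -- r has total degree ≤ d + 1
      have hrdeg : r.totalDegree ≤ d + 1 := by
        rw [hr, Polynomial.eval_eq_sum_range]
        refine (totalDegree_finset_sum _ _).trans ?_
        refine Finset.sup_le fun i _ => ?_
        by_cases hgi : g.coeff i = 0
        · simp [hgi]
        · refine (totalDegree_mul _ _).trans ?_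
          have h1 := totalDegree_coeff_finSuccEquiv_add_le f i (hg ▸ hgi)
          rw [← hg] at h1
          have h2 : (y ^ i).totalDegree = 0 := by
            rw [hy, ← C_pow, totalDegree_C]
          omega
      -- r vanishes on the simplex with base Fin.tail c
      have hrvan : ∀ a : Fin n → ℕ, ∑ i, a i ≤ d + 1 →
          MvPolynomial.eval (fun i => ((Fin.tail c i + a i : ℕ) : ℂ)) r = 0 := by
        intro a ha
        set s : Fin n → ℂ := fun i => ((Fin.tail c i + a i : ℕ) : ℂ) with hs
        have key := MvPolynomial.eval_eq_eval_mv_eval' s ((c 0 : ℕ) : ℂ) f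
        have hL : (Fin.cons ((c 0 : ℕ) : ℂ) s : Fin (n+1) → ℂ)
            = fun i => ((c i + (Fin.cons 0 a : Fin (n+1) → ℕ) i : ℕ) : ℂ) := by
          funext i
          refine Fin.cases ?_ (fun j => ?_) i
          · simp
          · simp [hs, Fin.tail]
        have hsum : ∑ i, (Fin.cons 0 a : Fin (n+1) → ℕ) i ≤ d + 1 := by
          rw [Fin.sum_cons]; simpa using ha
        rw [hL] at key
        rw [h _ hsum] at key
        -- key : 0 = Polynomial.eval (c 0) (map (eval s) g)
        have : MvPolynomial.eval s r = Polynomial.eval ((c 0 : ℕ) : ℂ)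
            (Polynomial.map (MvPolynomial.eval s) g) := by
          rw [hr, hy]
          have := Polynomial.eval₂_hom (MvPolynomial.eval s) (p := g) (C ((c 0 : ℕ) : ℂ))
          rw [MvPolynomial.eval_C] at this
          rw [← this, Polynomial.eval₂_eq_eval_map]
        rw [this, ← key]
      have hr0 : r = 0 := ih (d + 1) r (Fin.tail c) hrdeg hrvan
      -- hence (X - C y) divides g
      have hroot : g.IsRoot y := hr0
      obtain ⟨g₁, hg₁⟩ := (Polynomial.dvd_iff_isRoot).mpr hroot
      set q : MvPolynomial (Fin (n+1)) ℂ := (MvPolynomial.finSuccEquiv ℂ n).symm g₁ with hq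
      have hfq : f = (X 0 - C ((c 0 : ℕ) : ℂ)) * q := by
        apply (MvPolynomial.finSuccEquiv ℂ n).injective
        rw [map_mul, map_sub, MvPolynomial.finSuccEquiv_X_zero]
        have hC : MvPolynomial.finSuccEquiv ℂ n (C ((c 0 : ℕ) : ℂ)) = Polynomial.C y := by
          simp [MvPolynomial.finSuccEquiv_apply, hy]
        rw [hC, AlgEquiv.apply_symm_apply]
        exact hg₁
      by_cases hq0 : q = 0
      · rw [hfq, hq0, mul_zero]
      -- q has total degree ≤ d
      have hqdeg : q.totalDegree ≤ d := by
        have := aux_td_lower (0 : Fin (n+1)) ((c 0 : ℕ) : ℂ) q hq0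
        rw [← hfq] at this
        omega
      -- q vanishes on simplex of size d with base c + e₀
      set c' : Fin (n+1) → ℕ := Function.update c 0 (c 0 + 1) with hc'
      have hqvan : ∀ a : Fin (n+1) → ℕ, ∑ i, a i ≤ d →
          MvPolynomial.eval (fun i => ((c' i + a i : ℕ) : ℂ)) q = 0 := by
        intro a ha
        set a' : Fin (n+1) → ℕ := Function.update a 0 (a 0 + 1) with ha'
        have hsum : ∑ i, a' i ≤ d + 1 := by
          have h2 : ∑ i, a i = a 0 + ∑ x ∈ Finset.univ \ {0}, a x :=
            Finset.sum_eq_add_sum_sdiff_singleton_of_mem (Finset.mem_univ 0) a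
          have h3 : ∑ i, a' i = a' 0 + ∑ x ∈ Finset.univ \ {0}, a' x :=
            Finset.sum_eq_add_sum_sdiff_singleton_of_mem (Finset.mem_univ 0) a'
          have h4 : ∑ x ∈ Finset.univ \ {0}, a' x = ∑ x ∈ Finset.univ \ {0}, a x := by
            refine Finset.sum_congr rfl fun x hx => ?_
            rw [ha', Function.update_of_ne (by simpa using (Finset.mem_sdiff.mp hx).2)]
          have h5 : a' 0 = a 0 + 1 := by rw [ha']; simp
          omega
        have hpt : (fun i => ((c i + a' i : ℕ) : ℂ)) = fun i => ((c' i + a i : ℕ) : ℂ) := by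
          funext i
          by_cases hi : i = 0
          · subst hi; simp [ha', hc']; ring_nf
          · simp [ha', hc', Function.update_of_ne hi]
        have hv := h a' hsum
        rw [hpt, hfq, map_mul] at hv
        have hfactor : MvPolynomial.eval (fun i => ((c' i + a i : ℕ) : ℂ))
            (X (0 : Fin (n+1)) - C ((c 0 : ℕ) : ℂ)) = ((a 0 : ℂ) + 1) := by
          rw [map_sub, MvPolynomial.eval_X, MvPolynomial.eval_C]
          simp [hc']
          ring
        rw [hfactor] at hv
        have hne : ((a 0 : ℂ) + 1) ≠ 0 := by
          have : (0:ℝ) < (a 0 : ℝ) + 1 := by positivity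
          intro hcon
          have := congrArg Complex.re hcon
          simp at this
          linarith
        exact (mul_eq_zero.mp hv).resolve_left hne
      have := ihd d (Nat.lt_succ_self d) q c' hqdeg hqvan
      rw [hfq, this, mul_zero]

theorem stmt_11 (n d : ℕ) (f : MvPolynomial (Fin n) ℂ) (hdeg : f.totalDegree ≤ d)
    (h : ∀ a : Fin n → ℕ, ∑ i, a i ≤ d →
      MvPolynomial.eval (fun i => (a i : ℂ)) f = 0) :
    f = 0 := by
  refine aux_vanish n d f 0 hdeg fun a ha => ?_
  simpa using h a ha
end

section
/- Let F : ℂⁿ → ℂᵐ be a polynomial map, and let P : Mat_{m,n}(ℂ) → ℂ be a polynomial function of degree ≤ d in the matrix entries. Fix μ ∈ ℂ and suppose P(∑_{i=1}^d (JF)(α_i)) = μ for all α₁, ..., α_d ∈ ℂⁿ. Then for all s ∈ ℕ, all α₁, ..., α_s ∈ ℂⁿ, and all b₁, ..., b_s ∈ ℂ with ∑ b_i = d, we have P(∑_{i=1}^s b_i · (JF)(α_i)) = μ. -/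
open MvPolynomial


lemma tdeg_natCast {σ : Type*} (a : ℕ) :
    ((a : MvPolynomial σ ℂ)).totalDegree = 0 := by
  rw [← map_natCast (C : ℂ →+* MvPolynomial σ ℂ)]
  exact totalDegree_C _

lemma tdeg_pow_diff {s : ℕ} (j : Fin s) (k : ℕ) :
    ((X j + 1 : MvPolynomial (Fin s) ℂ) ^ (k + 1) - X j ^ (k + 1)).totalDegree ≤ k := by
  rw [add_pow]
  rw [Finset.sum_range_succ]
  simp only [Nat.choose_self, Nat.cast_one, mul_one, one_pow, Nat.sub_self, pow_zero]
  rw [add_sub_cancel_right]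
  refine (totalDegree_finset_sum _ _).trans (Finset.sup_le fun t ht => ?_)
  refine (totalDegree_mul _ _).trans ?_
  rw [tdeg_natCast (σ := Fin s) ((k+1).choose t), add_zero]
  refine (totalDegree_pow _ _).trans ?_
  rw [totalDegree_X, mul_one]
  exact Nat.lt_succ_iff.mp (Finset.mem_range.mp ht)

/-- shift substitution in direction `j` -/
noncomputable def shiftf {s : ℕ} (j : Fin s) : Fin s → MvPolynomial (Fin s) ℂ :=
  fun i => X i + C (if i = j then 1 else 0)

lemma shift_monomial_diff {s : ℕ} (j : Fin s) (a : Fin s →₀ ℕ) (c : ℂ) (e : ℕ)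
    (ha : (a.sum fun _ k => k) ≤ e + 1) :
    (aeval (shiftf j) (monomial a c) - monomial a c).totalDegree ≤ e := by
  rw [aeval_monomial, algebraMap_eq, monomial_eq]
  rcases Nat.eq_zero_or_pos (a j) with h0 | hpos
  · have hcongr : (a.prod fun i k => shiftf j i ^ k) = a.prod fun i k => X i ^ k := by
      apply Finsupp.prod_congr
      intro i hi
      have hij : i ≠ j := by
        rintro rfl
        exact (Finsupp.mem_support_iff.mp hi) h0
      simp [shiftf, hij]
    rw [hcongr, sub_self]
    simp
  · obtain ⟨k, hk⟩ : ∃ k, a j = k + 1 := ⟨a j - 1, by omega⟩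
    have hj : j ∈ a.support := Finsupp.mem_support_iff.mpr (by omega)
    have h1 : (a.prod fun i k => shiftf j i ^ k)
        = (X j + 1) ^ (a j) * ((a.erase j).prod fun i k => X i ^ k) := by
      rw [← Finsupp.mul_prod_erase a j _ hj]
      congr 1
      · simp [shiftf]
      · apply Finsupp.prod_congr
        intro i hi
        have hij : i ≠ j := by
          have := Finsupp.support_erase (a := j) (f := a) ▸ hi
          exact Finset.ne_of_mem_erase this
        simp [shiftf, hij]
    have h2 : (a.prod fun i k => (X i : MvPolynomial (Fin s) ℂ) ^ k)
        = X j ^ (a j) * ((a.erase j).prod fun i k => X i ^ k) := by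
      rw [← Finsupp.mul_prod_erase a j _ hj]
    set R := (a.erase j).prod fun i k => (X i : MvPolynomial (Fin s) ℂ) ^ k with hR
    have hdiff : C c * ((X j + 1) ^ a j * R) - C c * (X j ^ a j * R)
        = C c * R * ((X j + 1) ^ (a j) - X j ^ (a j)) := by ring
    rw [h1, h2, hdiff]
    have hsum : ((a.erase j).sum fun _ k => k) + a j = a.sum fun _ k => k := by
      rw [← Finsupp.add_sum_erase a j _ hj, add_comm]
    have hA : (C c * R).totalDegree ≤ (a.erase j).sum fun _ k => k := by
      refine (totalDegree_mul _ _).trans ?_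
      rw [totalDegree_C, zero_add]
      have hRm : R = monomial (a.erase j) (1 : ℂ) := by
        rw [monomial_eq, C_1, one_mul]
      rw [hRm]
      exact totalDegree_monomial_le _ _
    have hB : ((X j + 1 : MvPolynomial (Fin s) ℂ) ^ (a j) - X j ^ (a j)).totalDegree ≤ k := by
      rw [hk]; exact tdeg_pow_diff j k
    refine (totalDegree_mul _ _).trans ?_
    have := Nat.add_le_add hA hB
    omega

lemma tdeg_shift_sub {s : ℕ} (j : Fin s) (Q : MvPolynomial (Fin s) ℂ) (e : ℕ)
    (hQ : Q.totalDegree ≤ e + 1) :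
    (aeval (shiftf j) Q - Q).totalDegree ≤ e := by
  conv_lhs => rw [Q.as_sum, map_sum, ← Finset.sum_sub_distrib]
  refine (totalDegree_finset_sum _ _).trans (Finset.sup_le fun a ha => ?_)
  refine shift_monomial_diff j a _ e ?_
  exact le_trans (le_totalDegree ha) hQ
-- periodic univariate polynomial functions are constant
lemma periodic_poly_const (r : Polynomial ℂ) (hper : ∀ t : ℂ, r.eval (t + 1) = r.eval t) :
    ∀ t : ℂ, r.eval t = r.eval 0 := by
  have hn : ∀ n : ℕ, r.eval (n : ℂ) = r.eval 0 := by
    intro n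
    induction n with
    | zero => simp
    | succ k ih => push_cast; rw [hper (k : ℂ)]; exact ih
  have hroots : {t : ℂ | (r - Polynomial.C (r.eval 0)).IsRoot t}.Infinite := by
    apply Set.Infinite.mono (s := Set.range (Nat.cast : ℕ → ℂ))
    · rintro _ ⟨n, rfl⟩
      simp [Polynomial.IsRoot, hn n]
    · exact Set.infinite_range_of_injective Nat.cast_injective
  have hz : r - Polynomial.C (r.eval 0) = 0 := Polynomial.eq_zero_of_infinite_isRoot _ hroots
  intro t
  have := congrArg (Polynomial.eval t) hz
  simpa [sub_eq_zero] using this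

lemma eval_aeval' {σ τ : Type*} (g : σ → MvPolynomial τ ℂ) (x : τ → ℂ)
    (p : MvPolynomial σ ℂ) :
    eval x (aeval g p) = eval (fun i => eval x (g i)) p := by
  have h : (eval x).comp (algebraMap ℂ (MvPolynomial τ ℂ)) = RingHom.id ℂ := by
    ext r; simp [algebraMap_eq]
  rw [aeval_def, eval_eval₂, h, eval₂_id]

lemma eq_C_of_tdeg_zero {σ : Type*} (Q : MvPolynomial σ ℂ) (h : Q.totalDegree = 0) :
    Q = C (coeff 0 Q) := by
  classical
  ext m
  rcases eq_or_ne m 0 with rfl | hm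
  · simp
  · rw [coeff_C, if_neg (fun hc => hm hc.symm)]
    by_contra hne
    have hmem : m ∈ Q.support := Finsupp.mem_support_iff.mpr hne
    have := (totalDegree_eq_zero_iff _ Q).mp h m hmem
    exact hm (Finsupp.ext this)

-- univariate restriction: eval along coordinate j
noncomputable def uniRestrict {s : ℕ} (j : Fin s) (y : Fin s → ℂ)
    (Q : MvPolynomial (Fin s) ℂ) : Polynomial ℂ :=
  eval₂ Polynomial.C (fun i => if i = j then Polynomial.X else Polynomial.C (y i)) Q

lemma uniRestrict_eval {s : ℕ} (j : Fin s) (y : Fin s → ℂ)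
    (Q : MvPolynomial (Fin s) ℂ) (t : ℂ) :
    (uniRestrict j y Q).eval t = eval (fun i => if i = j then t else y i) Q := by
  have h := eval₂_comp_left (Polynomial.evalRingHom t) Polynomial.C
    (fun i => if i = j then Polynomial.X else Polynomial.C (y i)) Q
  have h2 : (Polynomial.evalRingHom t).comp Polynomial.C = RingHom.id ℂ := by
    ext r; simp
  rw [uniRestrict]
  show Polynomial.evalRingHom t (eval₂ _ _ Q) = _
  rw [h, h2, ]
  have h3 : ((Polynomial.evalRingHom t) ∘ fun i =>
      if i = j then Polynomial.X else Polynomial.C (y i)) = fun i => if i = j then t else y i := by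
    funext i; by_cases hij : i = j <;> simp [hij]
  rw [h3, eval₂_id]

lemma simplex_vanish (d : ℕ) : ∀ {s : ℕ} (Q : MvPolynomial (Fin s) ℂ),
    Q.totalDegree ≤ d →
    (∀ k : Fin s → ℕ, (∑ i, k i) ≤ d → eval (fun i => (k i : ℂ)) Q = 0) →
    ∀ x : Fin s → ℂ, eval x Q = 0 := by
  induction d with
  | zero =>
    intro s Q hdeg hvan x
    have h0 : Q.totalDegree = 0 := Nat.le_zero.mp hdeg
    have hc := hvan (fun _ => 0) (by simp)
    rw [eq_C_of_tdeg_zero Q h0] at hc ⊢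
    rw [eval_C] at hc ⊢
    exact hc
  | succ e IH =>
    intro s Q hdeg hvan x
    -- periodicity in every direction
    have hper : ∀ (j : Fin s) (y : Fin s → ℂ),
        eval (fun i => y i + if i = j then 1 else 0) Q = eval y Q := by
      intro j y
      have hdiff : ∀ z : Fin s → ℂ, eval z (aeval (shiftf j) Q - Q) = 0 := by
        refine IH _ (tdeg_shift_sub j Q e hdeg) ?_
        intro k hk
        rw [map_sub, eval_aeval']
        have hfun : (fun i => eval (fun i' => (k i' : ℂ)) (shiftf j i))
            = fun i => (((k i + if i = j then 1 else 0 : ℕ) : ℕ) : ℂ) := by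
          funext i
          by_cases hij : i = j <;> simp [shiftf, hij]
        rw [hfun]
        have hsum : (∑ i, (k i + if i = j then 1 else 0)) = (∑ i, k i) + 1 := by
          rw [Finset.sum_add_distrib]
          congr 1
          simp
        have h1 := hvan (fun i => k i + if i = j then 1 else 0) (by
          show (∑ i, (k i + if i = j then 1 else 0)) ≤ e + 1
          omega)
        rw [h1, hvan k (by omega), sub_zero]
      have h2 := hdiff y
      rw [map_sub, eval_aeval', sub_eq_zero] at h2
      have h3 : (fun i => eval y (shiftf j i)) = fun i => y i + if i = j then 1 else 0 := by
        funext i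
        by_cases hij : i = j <;> simp [shiftf, hij]
      rw [h3] at h2
      exact h2
    -- zero out one coordinate
    have hz : ∀ (j : Fin s) (y : Fin s → ℂ),
        eval y Q = eval (Function.update y j 0) Q := by
      intro j y
      have hper1 : ∀ t : ℂ, (uniRestrict j y Q).eval (t + 1) = (uniRestrict j y Q).eval t := by
        intro t
        rw [uniRestrict_eval, uniRestrict_eval]
        have := hper j (fun i => if i = j then t else y i)
        have hfun : (fun i => (if i = j then t else y i) + if i = j then 1 else 0)
            = fun i => if i = j then t + 1 else y i := by
          funext i; by_cases hij : i = j <;> simp [hij]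
        rw [hfun] at this
        exact this
      have hconst := periodic_poly_const _ hper1
      have hyj := hconst (y j)
      rw [uniRestrict_eval, uniRestrict_eval] at hyj
      have hl : (fun i => if i = j then y j else y i) = y := by
        funext i; by_cases hij : i = j <;> simp [hij]
      have hr : (fun i => if i = j then (0 : ℂ) else y i) = Function.update y j 0 := by
        funext i; rw [Function.update_apply]
      rw [hl, hr] at hyj
      exact hyj
    -- zero out all coordinates
    have hT : ∀ (T : Finset (Fin s)),
        eval x Q = eval (fun i => if i ∈ T then 0 else x i) Q := by
      intro T
      induction T using Finset.induction_on with
      | empty => simp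
      | @insert j T hj ih =>
        rw [ih, hz j]
        have hf : Function.update (fun i => if i ∈ T then 0 else x i) j (0:ℂ)
            = fun i => if i ∈ insert j T then 0 else x i := by
          funext i
          rw [Function.update_apply]
          by_cases hij : i = j
          · simp [hij]
          · simp only [if_neg hij, Finset.mem_insert]
            by_cases hiT : i ∈ T <;> simp [hiT, hij]
        rw [hf]
    have hfin := hT Finset.univ
    have h0 := hvan (fun _ => 0) (by simp)
    simp only [Finset.mem_univ, if_true] at hfin
    rw [hfin]
    simpa using h0

lemma exists_rep {n d s : ℕ} (k : Fin s → ℕ) (hd : ∑ r, k r = d)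
    (w : Fin s → (Fin n → ℂ)) :
    ∃ α' : Fin d → (Fin n → ℂ), ∀ {M : Type*} [AddCommMonoid M] (G : (Fin n → ℂ) → M),
      ∑ i, G (α' i) = ∑ r, k r • G (w r) := by
  have hcard : Fintype.card (Σ r : Fin s, Fin (k r)) = d := by
    simp [Fintype.card_sigma, hd]
  let e := Fintype.equivFinOfCardEq hcard
  refine ⟨fun i => w (e.symm i).1, ?_⟩
  intro M _ G
  have h1 : ∑ i, G (w (e.symm i).1) = ∑ σ : (Σ r : Fin s, Fin (k r)), G (w σ.1) :=
    Equiv.sum_comp e.symm (fun σ => G (w σ.1))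
  rw [h1, ← Finset.univ_sigma_univ, Finset.sum_sigma]
  refine Finset.sum_congr rfl fun r _ => ?_
  simp [Finset.sum_const]
lemma tdeg_aeval_le {σ τ : Type*} (g : σ → MvPolynomial τ ℂ)
    (hg : ∀ i, (g i).totalDegree ≤ 1) (p : MvPolynomial σ ℂ) :
    (aeval g p).totalDegree ≤ p.totalDegree := by
  conv_lhs => rw [p.as_sum]
  rw [map_sum]
  refine (totalDegree_finset_sum _ _).trans (Finset.sup_le fun a ha => ?_)
  rw [aeval_monomial]
  refine (totalDegree_mul _ _).trans ?_
  have h1 : (algebraMap ℂ (MvPolynomial τ ℂ) (coeff a p)).totalDegree = 0 := by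
    simp [algebraMap_eq]
  rw [h1, zero_add]
  refine le_trans ?_ (le_totalDegree ha)
  rw [Finsupp.prod, Finsupp.sum]
  refine (totalDegree_finset_prod _ _).trans ?_
  refine Finset.sum_le_sum fun i _ => ?_
  refine (totalDegree_pow _ _).trans ?_
  calc a i * (g i).totalDegree ≤ a i * 1 := Nat.mul_le_mul_left _ (hg i)
    _ = a i := Nat.mul_one _

/-- Evaluation of a polynomial in the entries of an `m × n` matrix. -/
noncomputable def matPolyEval {n m : ℕ} (P : MvPolynomial (Fin m × Fin n) ℂ)
    (A : Matrix (Fin m) (Fin n) ℂ) : ℂ :=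
  eval (fun p => A p.1 p.2) P

theorem stmt_13 (n m d : ℕ) (F : Fin m → MvPolynomial (Fin n) ℂ)
    (P : MvPolynomial (Fin m × Fin n) ℂ) (hP : P.totalDegree ≤ d)
    (μ : ℂ)
    (h : ∀ α : Fin d → Fin n → ℂ, matPolyEval P (∑ i, jacEval F (α i)) = μ) :
    ∀ (s : ℕ) (α : Fin s → Fin n → ℂ) (b : Fin s → ℂ), ∑ i, b i = (d : ℂ) →
      matPolyEval P (∑ i, b i • jacEval F (α i)) = μ := by
  intro s α b hb
  set N : Matrix (Fin m) (Fin n) ℂ := jacEval F (fun _ => 0) with hN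
  set M : Fin s → Matrix (Fin m) (Fin n) ℂ := fun r => jacEval F (α r) with hM
  set A : (Fin s → ℂ) → Matrix (Fin m) (Fin n) ℂ :=
    fun t => ∑ r, t r • M r + ((d : ℂ) - ∑ r, t r) • N with hA
  set g : Fin m × Fin n → MvPolynomial (Fin s) ℂ :=
    fun p => C ((d : ℂ) * N p.1 p.2) + ∑ r, C (M r p.1 p.2 - N p.1 p.2) * X r with hg
  set R : MvPolynomial (Fin s) ℂ := aeval g P with hRdef
  have hdegg : ∀ p, (g p).totalDegree ≤ 1 := by
    intro p
    refine (totalDegree_add _ _).trans (max_le (le_of_eq_of_le (totalDegree_C _) (Nat.zero_le _)) ?_)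
    refine (totalDegree_finset_sum _ _).trans (Finset.sup_le fun r _ => ?_)
    refine (totalDegree_mul _ _).trans ?_
    rw [totalDegree_C, totalDegree_X]
  have hdegR : R.totalDegree ≤ d := (tdeg_aeval_le g hdegg P).trans hP
  have heval : ∀ t : Fin s → ℂ, eval t R = matPolyEval P (A t) := by
    intro t
    rw [hRdef, eval_aeval', matPolyEval]
    have hfp : (fun p : Fin m × Fin n => eval t (g p)) = fun p => A t p.1 p.2 := by
      funext p
      simp only [hg, map_add, eval_C, map_sum, eval_mul, eval_X]
      simp only [hA, Matrix.add_apply, Matrix.sum_apply, Matrix.smul_apply, smul_eq_mul]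
      have hcomm : ∑ x : Fin s, (M x p.1 p.2 * t x - N p.1 p.2 * t x)
          = (∑ x : Fin s, t x * M x p.1 p.2) - N p.1 p.2 * ∑ x : Fin s, t x := by
        rw [Finset.sum_sub_distrib, ← Finset.mul_sum]
        congr 1
        exact Finset.sum_congr rfl fun x _ => mul_comm _ _
      rw [show (fun x : Fin s => (M x p.1 p.2 - N p.1 p.2) * t x)
            = fun x : Fin s => M x p.1 p.2 * t x - N p.1 p.2 * t x from
          funext fun x => by ring] at *
      rw [hcomm]
      ring
    rw [hfp]
  have hvan : ∀ k : Fin s → ℕ, (∑ i, k i) ≤ d → eval (fun i => (k i : ℂ)) R = μ := by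
    intro k hk
    set c : ℕ := d - ∑ i, k i with hc
    set k' : Fin (s + 1) → ℕ := Fin.snoc k c with hk'
    set w : Fin (s + 1) → (Fin n → ℂ) := Fin.snoc α (fun _ => 0) with hw
    have hd' : ∑ r, k' r = d := by
      rw [Fin.sum_univ_castSucc]
      simp only [hk', Fin.snoc_castSucc, Fin.snoc_last]
      omega
    obtain ⟨α', hα'⟩ := exists_rep k' hd' w
    have hmat : ∑ i, jacEval F (α' i) = ∑ i, (k i : ℂ) • M i + (c : ℂ) • N := by
      rw [hα' (jacEval F), Fin.sum_univ_castSucc]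
      simp only [hk', hw, Fin.snoc_castSucc, Fin.snoc_last]
      congr 1
      · refine Finset.sum_congr rfl fun r _ => ?_
        rw [← Nat.cast_smul_eq_nsmul ℂ]
      · rw [← Nat.cast_smul_eq_nsmul ℂ]
    have hAk : A (fun i => (k i : ℂ)) = ∑ i, (k i : ℂ) • M i + (c : ℂ) • N := by
      show (∑ r, ((k r : ℂ)) • M r + ((d : ℂ) - ∑ r, ((k r : ℂ))) • N)
          = ∑ i, (k i : ℂ) • M i + (c : ℂ) • N
      congr 1
      rw [hc]
      push_cast [Nat.cast_sub hk]
      ring_nf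
    rw [heval, hAk, ← hmat]
    exact h α'
  have hQ : ∀ x : Fin s → ℂ, eval x (R - C μ) = 0 := by
    refine simplex_vanish d (R - C μ) ((totalDegree_sub_C_le _ _).trans hdegR) ?_
    intro k hk
    rw [map_sub, eval_C, hvan k hk, sub_self]
  have hb' := hQ b
  rw [map_sub, eval_C, sub_eq_zero, heval] at hb'
  have hAb : A b = ∑ i, b i • M i := by
    show (∑ r, b r • M r + ((d : ℂ) - ∑ r, b r) • N) = ∑ i, b i • M i
    rw [hb, sub_self, zero_smul, add_zero]
  rw [hAb] at hb'
  exact hb'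
end

section
/- Let F : ℂⁿ → ℂᵐ be a polynomial map, and let P : Mat_{m,n}(ℂ) → ℂ be a homogeneous polynomial function of degree ≤ d in the matrix entries. Fix μ ∈ ℂ and suppose P(∑_{i=1}^d (JF)(α_i)) = μ for all α₁, ..., α_d ∈ ℂⁿ. Then for all s ∈ ℕ, all α₁, ..., α_s ∈ ℂⁿ, and all b₁, ..., b_s ∈ ℂ (with no constraint on ∑ b_i), P(∑_{i=1}^s b_i · (JF)(α_i)) = ((∑_{i=1}^s b_i)/d)^{deg P} · μ. -/
/-!
For fixed points `α₁, …, α_s`, the polynomial `G(b) = d^k P(∑ bᵢ JF(αᵢ)) - μ (∑ bᵢ)^k` in `b` is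
homogeneous of degree `k ≤ d`. Applying the hypothesis to the list in which `αᵢ` is repeated
`cᵢ` times shows that `G` vanishes at every `c ∈ ℕˢ` with `∑ cᵢ = d`. Solving `∑ bᵢ = d` for one
variable turns `G` into a polynomial of degree `≤ d` vanishing on the lattice simplex
`{c ∈ ℕ^(s-1) : ∑ cᵢ ≤ d}`; by Alon's Combinatorial Nullstellensatz it is zero, because the box
below a top-degree monomial lies in that simplex. So `G` vanishes on the hyperplane `∑ bᵢ = d`,
hence by homogeneity wherever `∑ bᵢ ≠ 0`, hence identically.
-/

open MvPolynomial

open Finset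

theorem Fintype.exists_fin_sum_comp_eq_sum_nsmul {ι M : Type*} [Fintype ι] [AddCommMonoid M]
    {c : ι → ℕ} {d : ℕ} (hc : ∑ i, c i = d) :
    ∃ β : Fin d → ι, ∀ f : ι → M, ∑ j, f (β j) = ∑ i, c i • f i := by
  let e : (Σ i, Fin (c i)) ≃ Fin d := Fintype.equivFinOfCardEq (by simp [hc])
  refine ⟨fun j => (e.symm j).1, fun f => ?_⟩
  rw [Equiv.sum_comp e.symm (fun p => f p.1), Fintype.sum_sigma]
  simp

namespace MvPolynomial

section CommSemiring

variable {R σ τ : Type*} [CommSemiring R]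

theorem eval_bind₁ (x : τ → R) (g : σ → MvPolynomial τ R) (φ : MvPolynomial σ R) :
    eval x (bind₁ g φ) = eval (fun i => eval x (g i)) φ :=
  eval₂Hom_bind₁ _ _ _ _

theorem totalDegree_bind₁_le {g : σ → MvPolynomial τ R} {n : ℕ}
    (hg : ∀ i, (g i).totalDegree ≤ n) (φ : MvPolynomial σ R) :
    (bind₁ g φ).totalDegree ≤ n * φ.totalDegree := by
  conv_lhs => rw [φ.as_sum, map_sum]
  refine (totalDegree_finsetSum _ _).trans (Finset.sup_le fun a ha => ?_)
  rw [bind₁_monomial]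
  calc (C (coeff a φ) * ∏ i ∈ a.support, g i ^ a i).totalDegree
      ≤ ∑ i ∈ a.support, (g i ^ a i).totalDegree := by
        refine (totalDegree_mul _ _).trans ?_
        rw [totalDegree_C, zero_add]
        exact totalDegree_finsetProd _ _
    _ ≤ ∑ i ∈ a.support, n * a i := Finset.sum_le_sum fun i _ =>
        (totalDegree_pow _ _).trans (by rw [mul_comm]; exact Nat.mul_le_mul_right _ (hg i))
    _ = n * a.sum fun _ e => e := by rw [Finsupp.sum, Finset.mul_sum]
    _ ≤ n * φ.totalDegree := Nat.mul_le_mul_left _ (le_totalDegree ha)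

theorem IsHomogeneous.eval_smul {φ : MvPolynomial σ R} {n : ℕ} (hφ : φ.IsHomogeneous n)
    (c : R) (x : σ → R) : eval (c • x) φ = c ^ n * eval x φ := by
  rw [eval_eq, eval_eq, Finset.mul_sum]
  refine Finset.sum_congr rfl fun a ha => ?_
  simp only [Pi.smul_apply, smul_eq_mul, mul_pow, Finset.prod_mul_distrib,
    Finset.prod_pow_eq_pow_sum, ← hφ.degree_eq_sum_deg_support ha]
  ring

end CommSemiring

section Interpolation

variable {σ : Type*} [Fintype σ]

theorem eq_zero_of_eval_natCast_eq_zero_of_sum_le {R : Type*} [CommRing R] [IsDomain R]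
    [CharZero R] {p : MvPolynomial σ R} {e : ℕ} (hp : p.totalDegree ≤ e)
    (h : ∀ c : σ → ℕ, ∑ i, c i ≤ e → eval (fun i => (c i : R)) p = 0) : p = 0 := by
  classical
  by_contra hp0
  obtain ⟨t, ht, htop⟩ := Finset.exists_mem_eq_sup p.support (support_nonempty.2 hp0)
    fun s => s.sum fun _ e => e
  obtain ⟨x, hxS, hx⟩ := combinatorial_nullstellensatz_exists_eval_nonzero p t
    (mem_support_iff.1 ht) htop (fun i => (range (t i + 1)).image (Nat.cast : ℕ → R))
    fun i => by rw [card_image_of_injective _ Nat.cast_injective, card_range]; omega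
  choose c hct hcx using fun i => mem_image.1 (hxS i)
  obtain rfl : (fun i => (c i : R)) = x := _root_.funext hcx
  refine hx (h c ((sum_le_sum fun i _ => Nat.lt_succ_iff.1 (mem_range.1 (hct i))).trans ?_))
  rw [← Finsupp.degree_eq_sum]
  exact htop.symm.le.trans hp

theorem IsHomogeneous.eq_zero_of_eval_natCast_eq_zero_of_sum_eq {K : Type*} [Field K]
    [CharZero K] [Nonempty σ] {G : MvPolynomial σ K} {k d : ℕ} (hG : G.IsHomogeneous k) (hkd : k ≤ d)
    (h : ∀ c : σ → ℕ, ∑ i, c i = d → eval (fun i => (c i : K)) G = 0) : G = 0 := by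
  classical
  obtain ⟨i₀⟩ := ‹Nonempty σ›
  -- `g` dehomogenizes by solving `∑ x = d` for the coordinate `i₀`
  let g : σ → MvPolynomial σ K := Function.update X i₀ (C (d : K) - ∑ j ∈ univ.erase i₀, X j)
  have eval_g : ∀ x : σ → K,
      (fun i => eval x (g i)) = Function.update x i₀ (d - ∑ j ∈ univ.erase i₀, x j) := by
    intro x
    ext i
    rcases eq_or_ne i i₀ with rfl | hi
    · simp [g]
    · simp [g, hi]
  have hdehom : bind₁ g G = 0 := by
    refine eq_zero_of_eval_natCast_eq_zero_of_sum_le (e := d)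
      ((totalDegree_bind₁_le (n := 1) (fun i => ?_) G).trans ?_) fun c hc => ?_
    · rcases eq_or_ne i i₀ with rfl | hi
      · simp only [g, Function.update_self]
        refine (totalDegree_sub _ _).trans (max_le (by rw [totalDegree_C]; omega) ?_)
        exact (totalDegree_finsetSum _ _).trans (Finset.sup_le fun j _ => (totalDegree_X j).le)
      · simp only [g, Function.update_of_ne hi, totalDegree_X, le_refl]
    · rw [one_mul]
      exact hG.totalDegree_le.trans hkd
    · have hle : ∑ j ∈ univ.erase i₀, c j ≤ d :=
        (sum_le_sum_of_subset (erase_subset _ _)).trans hc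
      have hsum : ∑ i, Function.update c i₀ (d - ∑ j ∈ univ.erase i₀, c j) i = d := by
        rw [← add_sum_erase _ _ (mem_univ i₀), Function.update_self,
          sum_congr rfl fun j hj => Function.update_of_ne (ne_of_mem_erase hj) _ _]
        omega
      rw [eval_bind₁, eval_g, ← h _ hsum]
      refine congrArg (fun y => eval y G) (_root_.funext fun i => ?_)
      rcases eq_or_ne i i₀ with rfl | hi
      · simp [Nat.cast_sub hle]
      · simp [hi]
  have on_hyperplane : ∀ x : σ → K, ∑ i, x i = d → eval x G = 0 := by
    intro x hx
    have : Function.update x i₀ (d - ∑ j ∈ univ.erase i₀, x j) = x := by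
      rw [← hx, ← add_sum_erase _ _ (mem_univ i₀), add_sub_cancel_right, Function.update_eq_self]
    rw [← this, ← eval_g, ← eval_bind₁, hdehom, map_zero]
  -- by homogeneity `G` vanishes wherever `∑ x` is a positive integer
  refine funext_set (fun _ => Set.range fun n : ℕ => (n + 1 : K))
    (fun _ => Set.infinite_range_of_injective fun m n hmn => by simpa using hmn) fun x hx => ?_
  choose n hn using fun i => hx i trivial
  have hN : (∑ i, x i) ≠ 0 := by
    have hcast : ∑ i, x i = ((∑ i, (n i + 1) : ℕ) : K) := by simp [← hn]
    rw [hcast, Nat.cast_ne_zero]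
    exact (sum_pos (fun i _ => Nat.succ_pos (n i)) univ_nonempty).ne'
  have hscale := hG.eval_smul ((d : K) / ∑ i, x i) x
  rw [on_hyperplane _ (by simp [← mul_sum, hN]), eq_comm, mul_eq_zero] at hscale
  refine hscale.resolve_left ?_
  rw [pow_eq_zero_iff', div_eq_zero_iff, Nat.cast_eq_zero]
  rintro ⟨hd | hx0, hk⟩
  exacts [hk (by omega), hN hx0]

end Interpolation

variable {K κ A : Type*} [Field K] [CharZero K]

theorem IsHomogeneous.eval_sum_smul_of_nonempty {ι : Type*} [Fintype ι] [Nonempty ι]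
    {P : MvPolynomial κ K} {k d : ℕ} (hP : P.IsHomogeneous k) (hkd : k ≤ d)
    (v : A → κ → K) {μ : K} (h : ∀ α : Fin d → A, eval (∑ j, v (α j)) P = μ)
    (α : ι → A) (b : ι → K) :
    eval (∑ i, b i • v (α i)) P = ((∑ i, b i) / d) ^ k * μ := by
  let G : MvPolynomial ι K := C ((d : K) ^ k) * bind₁ (fun p => ∑ i, C (v (α i) p) * X i) P
    - C μ * (∑ i, X i) ^ k
  have eval_G : ∀ b : ι → K,
      eval b G = d ^ k * eval (∑ i, b i • v (α i)) P - μ * (∑ i, b i) ^ k := by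
    intro b
    have hsubst : (fun p => eval b (∑ i, C (v (α i) p) * X i)) = ∑ i, b i • v (α i) := by
      ext p
      simp [mul_comm]
    rw [map_sub, map_mul, map_mul, eval_C, eval_C, eval_bind₁, hsubst, map_pow, map_sum]
    simp only [eval_X]
  have hG : G.IsHomogeneous k := by
    have hlin : (∑ i, X i : MvPolynomial ι K).IsHomogeneous 1 :=
      IsHomogeneous.sum _ _ _ fun i _ => isHomogeneous_X K i
    refine IsHomogeneous.sub (IsHomogeneous.C_mul ?_ _) (by simpa using (hlin.pow k).C_mul μ)
    simpa [aeval_eq_bind₁] using hP.aeval _ fun p =>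
      IsHomogeneous.sum _ _ _ fun i _ => isHomogeneous_C_mul_X (v (α i) p) i
  have hdk : (d : K) ^ k ≠ 0 := by
    rw [Ne, pow_eq_zero_iff', Nat.cast_eq_zero]
    omega
  have G_eq_zero : G = 0 := by
    refine hG.eq_zero_of_eval_natCast_eq_zero_of_sum_eq hkd fun c hc => ?_
    obtain ⟨β, hβ⟩ := Fintype.exists_fin_sum_comp_eq_sum_nsmul (M := κ → K) hc
    have hμ : eval (∑ i, (c i : K) • v (α i)) P = μ := by
      rw [← h (α ∘ β)]
      simp only [Function.comp_apply, hβ fun i => v (α i), Nat.cast_smul_eq_nsmul]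
    rw [eval_G, hμ, ← Nat.cast_sum, hc]
    ring
  have := eval_G b
  rw [G_eq_zero, map_zero, eq_comm, sub_eq_zero] at this
  rw [div_pow, div_mul_eq_mul_div, eq_div_iff hdk]
  linear_combination this

theorem IsHomogeneous.eval_sum_smul {ι : Type*} [Fintype ι] [Nonempty A]
    {P : MvPolynomial κ K} {k d : ℕ} (hP : P.IsHomogeneous k) (hkd : k ≤ d)
    (v : A → κ → K) {μ : K} (h : ∀ α : Fin d → A, eval (∑ j, v (α j)) P = μ)
    (α : ι → A) (b : ι → K) :
    eval (∑ i, b i • v (α i)) P = ((∑ i, b i) / d) ^ k * μ := by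
  obtain ⟨a⟩ := ‹Nonempty A›
  simpa [Fintype.sum_option] using
    hP.eval_sum_smul_of_nonempty hkd v h (Option.elim · a α) (Option.elim · 0 b)

end MvPolynomial

theorem stmt_14 (n m d k : ℕ) (F : Fin m → MvPolynomial (Fin n) ℂ)
    (P : MvPolynomial (Fin m × Fin n) ℂ) (hhom : P.IsHomogeneous k) (hkd : k ≤ d)
    (μ : ℂ)
    (h : ∀ α : Fin d → Fin n → ℂ, matPolyEval P (∑ i, jacEval F (α i)) = μ) :
    ∀ (s : ℕ) (α : Fin s → Fin n → ℂ) (b : Fin s → ℂ),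
      matPolyEval P (∑ i, b i • jacEval F (α i)) = ((∑ i, b i) / (d : ℂ)) ^ k * μ := by
  intro s α b
  simpa [matPolyEval, Matrix.sum_apply, Finset.sum_fn] using
    hhom.eval_sum_smul hkd (fun a p => jacEval F a p.1 p.2)
      (fun α => by simpa [matPolyEval, Matrix.sum_apply, Finset.sum_fn] using h α) α b
end

section
/- Let H : ℂⁿ → ℂⁿ be a polynomial map. Suppose for some m ≥ d, the trace of (∑_{i=1}^m (JH)(α_i))^d is zero for all α₁, ..., α_m ∈ ℂⁿ. Then for all s ∈ ℕ, all b₁, ..., b_s ∈ ℂ, and all α₁, ..., α_s ∈ ℂⁿ, the trace of (∑_{i=1}^s b_i · (JH)(α_i))^d is also zero. -/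
open MvPolynomial

/-!
Nothing about Jacobians is needed: the argument works for any family of square matrices `Aᵢ`.
Counting multiplicities, the hypothesis says `tr ((∑ kᵢ Aᵢ) ^ d) = 0` for `kᵢ ∈ ℕ` with
`∑ kᵢ = m`. Fixing one matrix `A₀` of the family and giving it multiplicity `m - ∑ kᵢ`, the
polynomial `x ↦ tr ((m A₀ + ∑ xᵢ (Aᵢ - A₀)) ^ d)`, of degree `≤ d ≤ m`, vanishes on the lattice
simplex `{k ∈ ℕˢ | ∑ kᵢ ≤ m}`, so by the combinatorial Nullstellensatz it vanishes identically:
`tr ((∑ bᵢ Aᵢ) ^ d) = 0` whenever `∑ bᵢ = m`. Homogeneity of `X ↦ tr (X ^ d)` extends this to all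
`b` with `∑ bᵢ ≠ 0`, and a polynomial vanishing there vanishes everywhere.
-/

theorem MvPolynomial.eq_zero_of_eval_natCast_eq_zero {R σ : Type*} [CommRing R] [IsDomain R]
    [CharZero R] [Fintype σ] {p : MvPolynomial σ R} {M : ℕ} (hp : p.totalDegree ≤ M)
    (h : ∀ k : σ → ℕ, ∑ i, k i ≤ M → eval (fun i => (k i : R)) p = 0) : p = 0 := by
  by_contra hp0
  obtain ⟨t, ht, hdeg⟩ := Finset.exists_mem_eq_sup p.support (support_nonempty.2 hp0)
    fun s => s.sum fun _ e => e
  -- the box `∏ᵢ {0, …, tᵢ}` around a top-degree monomial `X ^ t` lies in the simplex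
  obtain ⟨x, hx, hx0⟩ := combinatorial_nullstellensatz_exists_eval_nonzero p t
    (mem_support_iff.1 ht) hdeg (fun i => (Finset.range (t i + 1)).map Nat.castEmbedding)
    fun i => by simp
  choose k hk hkx using fun i => Finset.mem_map.1 (hx i)
  obtain rfl : x = fun i => (k i : R) := _root_.funext fun i => (hkx i).symm
  refine hx0 (h k ?_)
  calc ∑ i, k i ≤ ∑ i, t i :=
        Finset.sum_le_sum fun i _ => Nat.lt_succ_iff.1 (Finset.mem_range.1 (hk i))
    _ = p.totalDegree := by rw [totalDegree, hdeg, ← Finsupp.degree_eq_sum]; rfl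
    _ ≤ M := hp

section TracePowPoly

variable {n R σ : Type*} [Fintype n] [DecidableEq n] [CommSemiring R]

theorem Matrix.totalDegree_pow_apply_le {M : Matrix n n (MvPolynomial σ R)}
    (hM : ∀ i j, (M i j).totalDegree ≤ 1) (e : ℕ) (i j : n) :
    ((M ^ e) i j).totalDegree ≤ e := by
  induction e generalizing j with
  | zero => by_cases hij : i = j <;> simp [hij]
  | succ e ih =>
    rw [pow_succ, Matrix.mul_apply]
    refine (totalDegree_finsetSum _ _).trans (Finset.sup_le fun l _ => ?_)
    exact (totalDegree_mul _ _).trans (add_le_add (ih l) (hM l j))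

variable [Fintype σ]

noncomputable def tracePowPoly (B₀ : Matrix n n R) (B : σ → Matrix n n R) (d : ℕ) :
    MvPolynomial σ R :=
  Matrix.trace ((B₀.map C + ∑ i, (X i : MvPolynomial σ R) • (B i).map C) ^ d)

theorem eval_tracePowPoly (B₀ : Matrix n n R) (B : σ → Matrix n n R) (d : ℕ) (x : σ → R) :
    eval x (tracePowPoly B₀ B d) = Matrix.trace ((B₀ + ∑ i, x i • B i) ^ d) := by
  rw [tracePowPoly, AddMonoidHom.map_trace, ← RingHom.mapMatrix_apply, map_pow]
  congr 2
  ext i j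
  simp [Matrix.sum_apply]

theorem totalDegree_tracePowPoly_le (B₀ : Matrix n n R) (B : σ → Matrix n n R) (d : ℕ) :
    (tracePowPoly B₀ B d).totalDegree ≤ d := by
  refine (totalDegree_finsetSum _ _).trans
    (Finset.sup_le fun i _ => Matrix.totalDegree_pow_apply_le ?_ d i i)
  intro i j
  simp only [Matrix.add_apply, Matrix.map_apply, Matrix.sum_apply, Matrix.smul_apply, smul_eq_mul]
  refine (totalDegree_add _ _).trans (max_le (by simp) ?_)
  refine (totalDegree_finsetSum _ _).trans (Finset.sup_le fun l _ => ?_)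
  have hX : (X l : MvPolynomial σ R).totalDegree ≤ 1 :=
    (totalDegree_monomial_le _ _).trans (by simp)
  exact (totalDegree_mul _ _).trans (by simpa using hX)

end TracePowPoly

section TracePowSum

variable {n α ι : Type*} [Fintype n] [DecidableEq n] [Fintype ι] {d m : ℕ}

theorem trace_pow_sum_nsmul_eq_zero {R : Type*} [Semiring R] (V : α → Matrix n n R)
    (h : ∀ a : Fin m → α, Matrix.trace ((∑ i, V (a i)) ^ d) = 0) (k : ι → ℕ) (a : ι → α)
    (hk : ∑ i, k i = m) : Matrix.trace ((∑ i, k i • V (a i)) ^ d) = 0 := by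
  let e : (Σ i, Fin (k i)) ≃ Fin m := Fintype.equivFinOfCardEq (by simp [hk])
  convert h fun j => a (e.symm j).1 using 3
  rw [Equiv.sum_comp e.symm fun p => V (a p.1), ← Finset.univ_sigma_univ, Finset.sum_sigma]
  simp

variable {𝕜 : Type*} [Field 𝕜] [CharZero 𝕜]

theorem trace_pow_sum_smul_eq_zero_of_sum_eq (V : α → Matrix n n 𝕜) (a₀ : α) (hdm : d ≤ m)
    (h : ∀ a : Fin m → α, Matrix.trace ((∑ i, V (a i)) ^ d) = 0) (a : ι → α) (b : ι → 𝕜)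
    (hb : ∑ i, b i = m) : Matrix.trace ((∑ i, b i • V (a i)) ^ d) = 0 := by
  have hpoly : tracePowPoly ((m : 𝕜) • V a₀) (fun i => V (a i) - V a₀) d = 0 := by
    refine eq_zero_of_eval_natCast_eq_zero ((totalDegree_tracePowPoly_le _ _ _).trans hdm)
      fun k hk => ?_
    have hsum : ∑ o, Option.elim' (m - ∑ i, k i) k o = m := by
      simp only [Fintype.sum_option, Option.elim'_none, Option.elim'_some]
      omega
    have hlattice := trace_pow_sum_nsmul_eq_zero V h _ (Option.elim' a₀ a) hsum
    rw [eval_tracePowPoly]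
    convert hlattice using 3
    simp only [smul_sub, Finset.sum_sub_distrib, ← Finset.sum_smul, ← Nat.cast_smul_eq_nsmul 𝕜,
      Fintype.sum_option, Option.elim'_none, Nat.cast_sub hk, Nat.cast_sum, sub_smul,
      Option.elim'_some]
    abel
  have hb' := congrArg (eval b) hpoly
  rw [eval_tracePowPoly, map_zero] at hb'
  convert hb' using 3
  simp [smul_sub, Finset.sum_sub_distrib, ← Finset.sum_smul, hb]

theorem trace_pow_sum_smul_eq_zero_of_forall_sum_eq [Nonempty ι] (A : ι → Matrix n n 𝕜) {c : 𝕜}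
    (hc : c ≠ 0) (h : ∀ b : ι → 𝕜, ∑ i, b i = c → Matrix.trace ((∑ i, b i • A i) ^ d) = 0)
    (b : ι → 𝕜) : Matrix.trace ((∑ i, b i • A i) ^ d) = 0 := by
  have hf : tracePowPoly 0 A d * ∑ i, X i = 0 := MvPolynomial.funext fun y => by
    simp only [map_mul, map_zero, map_sum, eval_X, eval_tracePowPoly, zero_add]
    by_cases hy : ∑ i, y i = 0
    · rw [hy, mul_zero]
    have hscale := h ((c / ∑ i, y i) • y) (by simp [← Finset.mul_sum, hy])
    simp only [Pi.smul_apply, smul_eq_mul, mul_smul, ← Finset.smul_sum, smul_pow,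
      Matrix.trace_smul] at hscale
    simpa [hc, hy] using hscale
  have hX : (∑ i, X i : MvPolynomial ι 𝕜) ≠ 0 := fun h0 => by
    simpa using congrArg (eval fun _ => 1) h0
  simpa [eval_tracePowPoly] using congrArg (eval b) ((mul_eq_zero.1 hf).resolve_right hX)

theorem trace_pow_sum_smul_eq_zero (V : α → Matrix n n 𝕜) (a₀ : α) (hdm : d ≤ m)
    (h : ∀ a : Fin m → α, Matrix.trace ((∑ i, V (a i)) ^ d) = 0) (b : ι → 𝕜) (a : ι → α) :
    Matrix.trace ((∑ i, b i • V (a i)) ^ d) = 0 := by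
  obtain rfl | hd := Nat.eq_zero_or_pos d
  · simpa using h fun _ => a₀
  cases isEmpty_or_nonempty ι
  · simp [zero_pow hd.ne']
  exact trace_pow_sum_smul_eq_zero_of_forall_sum_eq _ (Nat.cast_ne_zero.2 (by omega))
    (fun b' hb' => trace_pow_sum_smul_eq_zero_of_sum_eq V a₀ hdm h a b' hb') b

end TracePowSum

theorem stmt_17 (n d m : ℕ) (hmd : m ≥ d) (H : Fin n → MvPolynomial (Fin n) ℂ)
    (h : ∀ α : Fin m → Fin n → ℂ, Matrix.trace ((∑ i, jacEval H (α i)) ^ d) = 0) :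
    ∀ (s : ℕ) (b : Fin s → ℂ) (α : Fin s → Fin n → ℂ),
      Matrix.trace ((∑ i, b i • jacEval H (α i)) ^ d) = 0 :=
  fun _ b α => trace_pow_sum_smul_eq_zero (jacEval H) 0 hmd h b α
end
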